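/- arXiv:2112.03449 — 10 statements merged into one kernel-verified Lean document; each statement's English description precedes it below -/
import Mathlib

section
/- Let b be a positive integer, δ ∈ (0,1), L > 0 with L/b ≥ log(2b/δ), and let v, v′ ∈ [−1,1]^d satisfy ∑_{l=1}^d |v_l − v′_l| ≤ L. Let h(1),…,h(d) be i.i.d. uniform on {1,…,b} and s(1),…,s(d) be i.i.d. uniform on {−1,+1}, with h and s independent. Then for each fixed bin index j ∈ {1,…,b}, the random variable Z = ∑_{l=1}^d 1[h(l)=j]·s(l)·(v_l − v′_l) satisfies Pr[ |Z| ≥ 3·√((L/b)·log(2b/δ)) ] ≤ δ/b. -/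
lemma exp_quad {x : ℝ} (hx : |x| ≤ 1) : Real.exp x ≤ 1 + x + x ^ 2 := by
  have h := Real.exp_bound hx (n := 2) (by norm_num)
  have h2 : ∑ m ∈ Finset.range 2, x ^ m / m.factorial = 1 + x := by
    simp [Finset.sum_range_succ]
  rw [h2] at h
  have h3 := (abs_sub_le_iff.1 h).1
  rw [sq_abs] at h3
  norm_num [Nat.factorial] at h3
  nlinarith [sq_nonneg x]

lemma mgf_bound (d b : ℕ) (hb : 0 < b) (j : Fin b) (μ : ℝ) (a : Fin d → ℝ)
    (ha : ∀ l, |μ * a l| ≤ 1) :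
    ∑ ω : (Fin d → Fin b) × (Fin d → Bool),
      Real.exp (μ * ∑ l : Fin d, (if ω.1 l = j then (1:ℝ) else 0) *
        (if ω.2 l then (1:ℝ) else -1) * a l)
      ≤ (2*b)^d * Real.exp (μ^2 * (∑ l : Fin d, (a l)^2) / b) := by
  set φ : Fin d → Fin b × Bool → ℝ := fun l p =>
    Real.exp (μ * ((if p.1 = j then (1:ℝ) else 0) * (if p.2 then (1:ℝ) else -1) * a l))
    with hφ
  have hbR : (0:ℝ) < b := by exact_mod_cast hb
  have step1 : ∀ ω : (Fin d → Fin b) × (Fin d → Bool),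
      Real.exp (μ * ∑ l : Fin d, (if ω.1 l = j then (1:ℝ) else 0) *
        (if ω.2 l then (1:ℝ) else -1) * a l) = ∏ l : Fin d, φ l (ω.1 l, ω.2 l) := by
    intro ω
    rw [Finset.mul_sum, Real.exp_sum]
  have step2 : ∑ ω : (Fin d → Fin b) × (Fin d → Bool), ∏ l : Fin d, φ l (ω.1 l, ω.2 l)
      = ∏ l : Fin d, ∑ p : Fin b × Bool, φ l p := by
    rw [Finset.prod_univ_sum]
    rw [Fintype.piFinset_univ]
    exact (Fintype.sum_equiv (Equiv.arrowProdEquivProdArrow (Fin d) (fun _ => Fin b) (fun _ => Bool))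
      _ _ (fun g => rfl)).symm
  have step3 : ∀ l : Fin d, ∑ p : Fin b × Bool, φ l p
      ≤ 2 * b * Real.exp (μ^2 * (a l)^2 / b) := by
    intro l
    have hsum : ∑ p : Fin b × Bool, φ l p
        = 2 * (b - 1) + (Real.exp (μ * a l) + Real.exp (-(μ * a l))) := by
      rw [Fintype.sum_prod_type]
      have hx : ∀ x : Fin b, (∑ s : Bool, φ l (x, s)) =
          (2 : ℝ) + (if x = j then (Real.exp (μ * a l) + Real.exp (-(μ * a l)) - 2) else 0) := by
        intro x
        rw [Fintype.sum_bool]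
        by_cases hxj : x = j <;> simp [hφ, hxj] <;> ring_nf
      rw [Finset.sum_congr rfl (fun x _ => hx x)]
      rw [Finset.sum_add_distrib, Finset.sum_const, Finset.sum_ite_eq' Finset.univ j]
      simp [Finset.card_univ]
      ring
    rw [hsum]
    have h1 : Real.exp (μ * a l) ≤ 1 + μ * a l + (μ * a l)^2 := exp_quad (ha l)
    have h2 : Real.exp (-(μ * a l)) ≤ 1 + (-(μ * a l)) + (-(μ * a l))^2 := by
      apply exp_quad; rw [abs_neg]; exact ha l
    have h3 : (2:ℝ) * (b-1) + (Real.exp (μ * a l) + Real.exp (-(μ * a l)))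
        ≤ 2 * b * (1 + μ^2 * (a l)^2 / b) := by
      have : 2 * (b:ℝ) * (1 + μ^2 * (a l)^2 / b) = 2*b + 2*(μ^2*(a l)^2) := by
        field_simp
      rw [this]; nlinarith
    refine h3.trans ?_
    have := Real.add_one_le_exp (μ^2 * (a l)^2 / b)
    nlinarith
  calc ∑ ω : (Fin d → Fin b) × (Fin d → Bool),
      Real.exp (μ * ∑ l : Fin d, (if ω.1 l = j then (1:ℝ) else 0) *
        (if ω.2 l then (1:ℝ) else -1) * a l)
      = ∏ l : Fin d, ∑ p : Fin b × Bool, φ l p := by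
        rw [← step2]; exact Finset.sum_congr rfl (fun ω _ => step1 ω)
    _ ≤ ∏ l : Fin d, (2 * b * Real.exp (μ^2 * (a l)^2 / b)) := by
        apply Finset.prod_le_prod
        · intro l _; positivity
        · intro l _; exact step3 l
    _ = (2*b)^d * Real.exp (μ^2 * (∑ l : Fin d, (a l)^2) / b) := by
        rw [Finset.prod_mul_distrib, Finset.prod_const, Finset.card_univ, ← Real.exp_sum]
        congr 1
        · simp
        · congr 1
          rw [Finset.mul_sum, Finset.sum_div]

/-- Let `b` be a positive integer, `δ ∈ (0,1)`, `L > 0` with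
`L/b ≥ log(2b/δ)`, and let `v, v' ∈ [−1,1]^d` satisfy `∑ |v_l − v'_l| ≤ L`.
With `h(1),…,h(d)` i.i.d. uniform on `{1,…,b}` and `s(1),…,s(d)` i.i.d. uniform
signs, independent of each other (i.e. `(h,s)` uniform on the finite product space),
for each fixed bin `j` the random variable
`Z = ∑_l 1[h(l)=j]·s(l)·(v_l − v'_l)` satisfies
`Pr[|Z| ≥ 3·√((L/b)·log(2b/δ))] ≤ δ/b`. -/
theorem sparse_binning_single_bin_concentration (d b : ℕ) (hd : 0 < d) (hb : 0 < b)
    (δ L : ℝ) (hδ0 : 0 < δ) (hδ1 : δ < 1) (hL : 0 < L)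
    (hLb : Real.log (2 * b / δ) ≤ L / b)
    (v v' : Fin d → ℝ)
    (hv : ∀ l, v l ∈ Set.Icc (-1 : ℝ) 1) (hv' : ∀ l, v' l ∈ Set.Icc (-1 : ℝ) 1)
    (hL1 : ∑ l : Fin d, |v l - v' l| ≤ L)
    (j : Fin b) :
    ((Finset.univ.filter (fun ω : (Fin d → Fin b) × (Fin d → Bool) =>
        3 * Real.sqrt (L / b * Real.log (2 * b / δ)) ≤
          |∑ l : Fin d, (if ω.1 l = j then (1 : ℝ) else 0) *
            (if ω.2 l then (1 : ℝ) else -1) * (v l - v' l)|)).card : ℝ)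
      / (Fintype.card ((Fin d → Fin b) × (Fin d → Bool)) : ℝ)
      ≤ δ / b := by
  have hbR : (0:ℝ) < b := by exact_mod_cast hb
  set a : Fin d → ℝ := fun l => v l - v' l with haa
  set A : ℝ := L / b with hAdef
  set B : ℝ := Real.log (2 * b / δ) with hBdef
  have hA : 0 < A := by positivity
  have hratio : (1:ℝ) < 2 * b / δ := by
    rw [lt_div_iff₀ hδ0]
    have : (1:ℝ) ≤ b := by exact_mod_cast hb
    nlinarith
  have hB : 0 < B := Real.log_pos hratio
  have hBA : B ≤ A := hLb
  set lam : ℝ := Real.sqrt (B / A) / 2 with hlamdef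
  have hlam0 : 0 < lam := by
    have : 0 < B / A := by positivity
    positivity
  have hlamhalf : lam ≤ 1 / 2 := by
    have h1 : B / A ≤ 1 := (div_le_one hA).2 hBA
    have := Real.sqrt_le_sqrt h1
    rw [Real.sqrt_one] at this
    rw [hlamdef]; linarith
  have hlamsq : lam ^ 2 = B / A / 4 := by
    rw [hlamdef, div_pow, Real.sq_sqrt (by positivity : (0:ℝ) ≤ B / A)]
    norm_num
  set t : ℝ := 3 * Real.sqrt (A * B) with htdef
  have hlt : lam * t = 3 / 2 * B := by
    have hs : Real.sqrt (B / A) * Real.sqrt (A * B) = B := by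
      rw [← Real.sqrt_mul (by positivity : (0:ℝ) ≤ B / A)]
      have h9 : B / A * (A * B) = B ^ 2 := by field_simp
      rw [h9, Real.sqrt_sq hB.le]
    have h8 : lam * t = 3 / 2 * (Real.sqrt (B / A) * Real.sqrt (A * B)) := by
      rw [hlamdef, htdef]; ring
    rw [h8, hs]
  have ha2 : ∀ l, |a l| ≤ 2 := by
    intro l
    have h1 := hv l; have h2 := hv' l
    simp only [Set.mem_Icc] at h1 h2
    rw [abs_le, haa]; constructor <;> simp <;> linarith [h1.1, h1.2, h2.1, h2.2]
  have hmul : ∀ (μ : ℝ), |μ| ≤ 1/2 → ∀ l, |μ * a l| ≤ 1 := by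
    intro μ hμ l
    rw [abs_mul]
    calc |μ| * |a l| ≤ (1/2) * 2 := by
          apply mul_le_mul hμ (ha2 l) (abs_nonneg _) (by norm_num)
      _ = 1 := by norm_num
  have hsumsq : ∑ l : Fin d, (a l) ^ 2 ≤ 2 * L := by
    have : ∀ l, (a l) ^ 2 ≤ 2 * |a l| := by
      intro l
      have h := ha2 l
      have h0 := abs_nonneg (a l)
      nlinarith [sq_abs (a l)]
    calc ∑ l : Fin d, (a l) ^ 2 ≤ ∑ l : Fin d, 2 * |a l| :=
          Finset.sum_le_sum (fun l _ => this l)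
      _ = 2 * ∑ l : Fin d, |a l| := by rw [Finset.mul_sum]
      _ ≤ 2 * L := by have := hL1; rw [haa]; nlinarith
  -- the exp-parameter bound, valid for μ = ±lam
  have hexparg : ∀ (μ : ℝ), μ ^ 2 = lam ^ 2 →
      μ ^ 2 * (∑ l : Fin d, (a l) ^ 2) / b ≤ B / 2 := by
    intro μ hμ
    rw [hμ, hlamsq]
    have hs0 : 0 ≤ ∑ l : Fin d, (a l) ^ 2 := Finset.sum_nonneg (fun l _ => sq_nonneg _)
    have h1 : B / A / 4 * (∑ l : Fin d, (a l) ^ 2) / b ≤ B / A / 4 * (2 * L) / b := by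
      gcongr
    refine h1.trans ?_
    have : B / A / 4 * (2 * L) / b = B / 2 * (L / b / A) := by ring
    rw [this, ← hAdef, div_self hA.ne']
    simp
  set Z : (Fin d → Fin b) × (Fin d → Bool) → ℝ := fun ω =>
    ∑ l : Fin d, (if ω.1 l = j then (1 : ℝ) else 0) *
      (if ω.2 l then (1 : ℝ) else -1) * (v l - v' l) with hZdef
  set E := Finset.univ.filter (fun ω : (Fin d → Fin b) × (Fin d → Bool) =>
      3 * Real.sqrt (L / b * Real.log (2 * b / δ)) ≤ |Z ω|) with hEdef
  -- MGF bounds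
  have hmgf : ∀ (μ : ℝ), |μ| ≤ 1/2 → μ ^ 2 = lam ^ 2 →
      ∑ ω : (Fin d → Fin b) × (Fin d → Bool), Real.exp (μ * Z ω)
        ≤ (2 * b) ^ d * Real.exp (B / 2) := by
    intro μ hμ hμ2
    have h := mgf_bound d b hb j μ a (hmul μ hμ)
    refine h.trans ?_
    have := hexparg μ hμ2
    have hmono := Real.exp_le_exp.2 this
    have hpos : (0:ℝ) ≤ (2 * (b:ℝ)) ^ d := by positivity
    exact mul_le_mul_of_nonneg_left hmono hpos
  -- Markov
  have hmarkov : (E.card : ℝ) * Real.exp (lam * t) ≤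
      ∑ ω : (Fin d → Fin b) × (Fin d → Bool),
        (Real.exp (lam * Z ω) + Real.exp (-lam * Z ω)) := by
    have hptw : ∀ ω ∈ E, Real.exp (lam * t) ≤
        Real.exp (lam * Z ω) + Real.exp (-lam * Z ω) := by
      intro ω hω
      rw [hEdef, Finset.mem_filter] at hω
      have ht : t ≤ |Z ω| := hω.2
      rcases le_abs.1 ht with h | h
      · have : lam * t ≤ lam * Z ω := mul_le_mul_of_nonneg_left h hlam0.le
        have h1 := Real.exp_le_exp.2 this
        have h2 := Real.exp_pos (-lam * Z ω)
        linarith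
      · have : lam * t ≤ -lam * Z ω := by nlinarith
        have h1 := Real.exp_le_exp.2 this
        have h2 := Real.exp_pos (lam * Z ω)
        linarith
    calc (E.card : ℝ) * Real.exp (lam * t)
        = ∑ _ω ∈ E, Real.exp (lam * t) := by rw [Finset.sum_const, nsmul_eq_mul]
      _ ≤ ∑ ω ∈ E, (Real.exp (lam * Z ω) + Real.exp (-lam * Z ω)) :=
          Finset.sum_le_sum hptw
      _ ≤ ∑ ω : (Fin d → Fin b) × (Fin d → Bool),
            (Real.exp (lam * Z ω) + Real.exp (-lam * Z ω)) := by
          apply Finset.sum_le_sum_of_subset_of_nonneg (Finset.filter_subset _ _)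
          intro ω _ _; positivity
  have hsplit : ∑ ω : (Fin d → Fin b) × (Fin d → Bool),
      (Real.exp (lam * Z ω) + Real.exp (-lam * Z ω))
      ≤ 2 * ((2 * b) ^ d * Real.exp (B / 2)) := by
    rw [Finset.sum_add_distrib]
    have h1 := hmgf lam (by rw [abs_of_pos hlam0]; exact hlamhalf) rfl
    have h2 := hmgf (-lam) (by rw [abs_neg, abs_of_pos hlam0]; exact hlamhalf) (neg_sq lam)
    linarith
  -- put it together
  have hcard : (E.card : ℝ) ≤ (2 * (b:ℝ)) ^ d * (δ / b) := by
    have h1 : (E.card : ℝ) * Real.exp (3 / 2 * B) ≤ 2 * ((2 * b) ^ d * Real.exp (B / 2)) := by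
      rw [← hlt]; exact hmarkov.trans hsplit
    have hexpB : Real.exp (-B) = δ / (2 * b) := by
      rw [Real.exp_neg, hBdef, Real.exp_log (by positivity)]
      rw [inv_div]
    have h2 : (E.card : ℝ) ≤ 2 * ((2 * b) ^ d * Real.exp (B / 2)) / Real.exp (3 / 2 * B) := by
      rw [le_div_iff₀ (Real.exp_pos _)]; exact h1
    refine h2.trans ?_
    have e1 : 2 * ((2 * (b:ℝ)) ^ d * Real.exp (B / 2)) / Real.exp (3 / 2 * B)
        = (2 * (b:ℝ)) ^ d * (2 * Real.exp (B / 2 - 3 / 2 * B)) := by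
      rw [Real.exp_sub]
      field_simp
    have e2 : B / 2 - 3 / 2 * B = -B := by ring
    rw [e1, e2, hexpB]
    have e3 : (2:ℝ) * (δ / (2 * (b:ℝ))) = δ / b := by
      field_simp
    rw [e3]
  have hcardN : (Fintype.card ((Fin d → Fin b) × (Fin d → Bool)) : ℝ) = (2 * (b:ℝ)) ^ d := by
    have h9 : Fintype.card ((Fin d → Fin b) × (Fin d → Bool)) = (2 * b) ^ d := by
      simp [Fintype.card_prod, Fintype.card_fun, mul_pow, Nat.mul_comm]
    rw [h9]
    push_cast
    ring
  rw [hcardN, div_le_iff₀ (by positivity)]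
  calc (E.card : ℝ) ≤ (2 * (b:ℝ)) ^ d * (δ / b) := hcard
    _ = δ / b * (2 * (b:ℝ)) ^ d := by ring
end

section
/- Let b be a positive integer, δ ∈ (0,1), L > 0 with L/b ≥ log(2b/δ), and let v, v′ ∈ [−1,1]^d satisfy ∑_{l=1}^d |v_l − v′_l| ≤ L. Let h(1),…,h(d) be i.i.d. uniform on {1,…,b} and s(1),…,s(d) be i.i.d. uniform on {−1,+1}, with h and s independent, and set B_j = ∑_{l : h(l)=j} s(l)·v_l and B′_j = ∑_{l : h(l)=j} s(l)·v′_l for j ∈ {1,…,b}. Then Pr[ ∑_{j=1}^{b} |B_j − B′_j| > 3·√(b·L·log(2b/δ)) ] ≤ δ. -/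
open Finset Real

private lemma sum_pi_prod {α β : Type*} [Fintype α] [DecidableEq α] [Fintype β]
    (f : α → β → ℝ) :
    ∑ g : α → β, ∏ i, f i (g i) = ∏ i, ∑ a : β, f i a := by
  rw [Finset.prod_univ_sum (fun _ => univ) f, Fintype.piFinset_univ]

private lemma exp_add_exp_neg_le {x : ℝ} (hx : |x| ≤ 1) :
    Real.exp x + Real.exp (-x) ≤ 2 + 2 * x ^ 2 := by
  have h1 := Real.exp_bound hx (by norm_num : 0 < 2)
  have h2 := Real.exp_bound (x := -x) (by rwa [abs_neg]) (by norm_num : 0 < 2)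
  simp [Finset.sum_range_succ, abs_sub_le_iff] at h1 h2
  nlinarith [h1.1, h1.2, h2.1, h2.2, sq_nonneg x, sq_abs x]

/-- Chernoff bound for a single bin. -/
private lemma chernoff_bin (d b : ℕ) (hb : 0 < b) (θ t : ℝ) (hθ : 0 ≤ θ)
    (w : Fin d → ℝ) (hw1 : ∀ l, |θ * w l| ≤ 1) (j : Fin b) :
    ((Finset.univ.filter (fun ω : (Fin d → Fin b) × (Fin d → Bool) =>
        t < ∑ l : Fin d, (if ω.1 l = j then (1 : ℝ) else 0) *
            (if ω.2 l then (1 : ℝ) else -1) * w l)).card : ℝ)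
      ≤ (Fintype.card ((Fin d → Fin b) × (Fin d → Bool)) : ℝ) *
          Real.exp (θ ^ 2 * (∑ l, (w l) ^ 2) / b - θ * t) := by
  have hb0 : (0 : ℝ) < b := by exact_mod_cast hb
  set X : (Fin d → Fin b) × (Fin d → Bool) → ℝ := fun ω =>
    ∑ l : Fin d, (if ω.1 l = j then (1 : ℝ) else 0) *
        (if ω.2 l then (1 : ℝ) else -1) * w l with hX
  -- step A : card ≤ sum of exp
  have hA : ((Finset.univ.filter (fun ω => t < X ω)).card : ℝ)
      ≤ ∑ ω : (Fin d → Fin b) × (Fin d → Bool), Real.exp (θ * (X ω - t)) := by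
    calc ((Finset.univ.filter (fun ω => t < X ω)).card : ℝ)
        = ∑ ω ∈ Finset.univ.filter (fun ω => t < X ω), (1 : ℝ) := by simp
      _ ≤ ∑ ω ∈ Finset.univ.filter (fun ω => t < X ω), Real.exp (θ * (X ω - t)) := by
          refine Finset.sum_le_sum fun ω hω => ?_
          rw [Finset.mem_filter] at hω
          exact Real.one_le_exp (mul_nonneg hθ (by linarith [hω.2]))
      _ ≤ _ := Finset.sum_le_sum_of_subset_of_nonneg (Finset.filter_subset _ _)
          (fun _ _ _ => (Real.exp_pos _).le)
  -- step C : MGF factorization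
  have hC : ∑ ω : (Fin d → Fin b) × (Fin d → Bool), Real.exp (θ * X ω)
      = ∏ l : Fin d, ∑ a : Fin b, ∑ e : Bool,
          Real.exp (θ * ((if a = j then (1 : ℝ) else 0) *
            (if e = true then (1 : ℝ) else -1) * w l)) := by
    calc ∑ ω : (Fin d → Fin b) × (Fin d → Bool), Real.exp (θ * X ω)
        = ∑ h : Fin d → Fin b, ∑ s : Fin d → Bool, ∏ l : Fin d,
            Real.exp (θ * ((if h l = j then (1 : ℝ) else 0) *
              (if s l then (1 : ℝ) else -1) * w l)) := by
          rw [Fintype.sum_prod_type]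
          refine Finset.sum_congr rfl fun h _ => Finset.sum_congr rfl fun s _ => ?_
          rw [hX]
          rw [Finset.mul_sum, Real.exp_sum]
      _ = ∑ h : Fin d → Fin b, ∏ l : Fin d, ∑ e : Bool,
            Real.exp (θ * ((if h l = j then (1 : ℝ) else 0) *
              (if e = true then (1 : ℝ) else -1) * w l)) := by
          refine Finset.sum_congr rfl fun h _ => ?_
          exact (sum_pi_prod (fun l e => Real.exp (θ * ((if h l = j then (1 : ℝ) else 0) *
            (if e = true then (1 : ℝ) else -1) * w l)))).symm ▸ rfl
      _ = _ := sum_pi_prod (fun l a => ∑ e : Bool,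
            Real.exp (θ * ((if a = j then (1 : ℝ) else 0) *
              (if e = true then (1 : ℝ) else -1) * w l)))
  -- step D : per-factor bound
  have hfac : ∀ l : Fin d,
      (∑ a : Fin b, ∑ e : Bool, Real.exp (θ * ((if a = j then (1 : ℝ) else 0) *
          (if e = true then (1 : ℝ) else -1) * w l)))
        ≤ 2 * b * Real.exp (θ ^ 2 * (w l) ^ 2 / b) := by
    intro l
    have hsum : (∑ a : Fin b, ∑ e : Bool, Real.exp (θ * ((if a = j then (1 : ℝ) else 0) *
          (if e = true then (1 : ℝ) else -1) * w l)))
        = (Real.exp (θ * w l) + Real.exp (-(θ * w l)) - 2) + 2 * b := by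
      have key : ∀ a : Fin b,
          (∑ e : Bool, Real.exp (θ * ((if a = j then (1 : ℝ) else 0) *
            (if e = true then (1 : ℝ) else -1) * w l)))
          = (if a = j then Real.exp (θ * w l) + Real.exp (-(θ * w l)) - 2 else 0) + 2 := by
        intro a
        by_cases h : a = j
        · simp [h, Fintype.sum_bool]
        · simp [h, Fintype.sum_bool]
      rw [Finset.sum_congr rfl (fun a _ => key a)]
      rw [Finset.sum_add_distrib, Finset.sum_ite_eq' Finset.univ j]
      simp [Finset.card_univ, mul_comm]
    rw [hsum]
    have hexp := exp_add_exp_neg_le (hw1 l)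
    have hy := Real.add_one_le_exp (θ ^ 2 * (w l) ^ 2 / b)
    have h2b : (0:ℝ) < 2 * b := by linarith
    have key2 : 2 * (b:ℝ) * (θ ^ 2 * (w l) ^ 2 / b + 1) = 2 * (θ * w l) ^ 2 + 2 * b := by
      field_simp
    nlinarith [mul_le_mul_of_nonneg_left hy (le_of_lt h2b)]
  -- step E : product bound
  have hE : (∏ l : Fin d, ∑ a : Fin b, ∑ e : Bool,
        Real.exp (θ * ((if a = j then (1 : ℝ) else 0) *
          (if e = true then (1 : ℝ) else -1) * w l)))
      ≤ (Fintype.card ((Fin d → Fin b) × (Fin d → Bool)) : ℝ) *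
          Real.exp (θ ^ 2 * (∑ l, (w l) ^ 2) / b) := by
    calc (∏ l : Fin d, ∑ a : Fin b, ∑ e : Bool,
          Real.exp (θ * ((if a = j then (1 : ℝ) else 0) *
            (if e = true then (1 : ℝ) else -1) * w l)))
        ≤ ∏ l : Fin d, 2 * (b:ℝ) * Real.exp (θ ^ 2 * (w l) ^ 2 / b) := by
          refine Finset.prod_le_prod (fun l _ => ?_) (fun l _ => hfac l)
          positivity
      _ = (2 * (b:ℝ)) ^ d * Real.exp (∑ l, θ ^ 2 * (w l) ^ 2 / b) := by
          rw [Finset.prod_mul_distrib, Finset.prod_const, ← Real.exp_sum]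
          simp [Finset.card_univ]
      _ = (Fintype.card ((Fin d → Fin b) × (Fin d → Bool)) : ℝ) *
            Real.exp (θ ^ 2 * (∑ l, (w l) ^ 2) / b) := by
          congr 1
          · simp [Fintype.card_prod, Fintype.card_fun, mul_pow]
            ring
          · congr 1
            rw [Finset.mul_sum, Finset.sum_div]
  -- assemble
  calc ((Finset.univ.filter (fun ω => t < X ω)).card : ℝ)
      ≤ ∑ ω : (Fin d → Fin b) × (Fin d → Bool), Real.exp (θ * (X ω - t)) := hA
    _ = Real.exp (-(θ * t)) * ∑ ω : (Fin d → Fin b) × (Fin d → Bool),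
          Real.exp (θ * X ω) := by
        rw [Finset.mul_sum]
        refine Finset.sum_congr rfl fun ω _ => ?_
        rw [← Real.exp_add]; ring_nf
    _ ≤ Real.exp (-(θ * t)) * ((Fintype.card ((Fin d → Fin b) × (Fin d → Bool)) : ℝ) *
          Real.exp (θ ^ 2 * (∑ l, (w l) ^ 2) / b)) := by
        rw [hC]
        exact mul_le_mul_of_nonneg_left hE (Real.exp_pos _).le
    _ = (Fintype.card ((Fin d → Fin b) × (Fin d → Bool)) : ℝ) *
          Real.exp (θ ^ 2 * (∑ l, (w l) ^ 2) / b - θ * t) := by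
        rw [Real.exp_sub, Real.exp_neg]
        field_simp

/-- With `b` a positive integer, `δ ∈ (0,1)`, `L > 0` with
`L/b ≥ log(2b/δ)`, and `v, v' ∈ [−1,1]^d` with `∑ |v_l − v'_l| ≤ L`, if `(h,s)` is a
uniformly random hash pair (hash values i.i.d. uniform on `{1,…,b}` and signs i.i.d.
uniform on `{−1,+1}`, independent), and `B_j = ∑_{l : h(l)=j} s(l)·v_l`,
`B'_j = ∑_{l : h(l)=j} s(l)·v'_l`, then
`Pr[ ∑_j |B_j − B'_j| > 3·√(b·L·log(2b/δ)) ] ≤ δ`. -/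
theorem sparse_binning_total_L1_concentration (d b : ℕ) (hd : 0 < d) (hb : 0 < b)
    (δ L : ℝ) (hδ0 : 0 < δ) (hδ1 : δ < 1) (hL : 0 < L)
    (hLb : Real.log (2 * b / δ) ≤ L / b)
    (v v' : Fin d → ℝ)
    (hv : ∀ l, v l ∈ Set.Icc (-1 : ℝ) 1) (hv' : ∀ l, v' l ∈ Set.Icc (-1 : ℝ) 1)
    (hL1 : ∑ l : Fin d, |v l - v' l| ≤ L) :
    ((Finset.univ.filter (fun ω : (Fin d → Fin b) × (Fin d → Bool) =>
        3 * Real.sqrt (b * L * Real.log (2 * b / δ)) <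
          ∑ j : Fin b,
            |(∑ l : Fin d, (if ω.1 l = j then (1 : ℝ) else 0) *
                (if ω.2 l then (1 : ℝ) else -1) * v l) -
              (∑ l : Fin d, (if ω.1 l = j then (1 : ℝ) else 0) *
                (if ω.2 l then (1 : ℝ) else -1) * v' l)|)).card : ℝ)
      / (Fintype.card ((Fin d → Fin b) × (Fin d → Bool)) : ℝ)
      ≤ δ := by
  classical
  have hb0 : (0 : ℝ) < b := by exact_mod_cast hb
  have hb1 : (1 : ℝ) ≤ b := by exact_mod_cast hb
  set lam := Real.log (2 * b / δ) with hlamdef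
  have hratio : (1 : ℝ) < 2 * b / δ := by
    rw [lt_div_iff₀ hδ0]; nlinarith
  have hlam0 : 0 < lam := Real.log_pos hratio
  set θ := Real.sqrt (lam * b / L) / 2 with hθdef
  set t := 3 * Real.sqrt (L * lam / b) with htdef
  have hθ0 : 0 ≤ θ := by positivity
  have h1 : lam * b / L ≤ 1 := by
    rw [div_le_one hL]
    calc lam * b ≤ (L / b) * b := by nlinarith
      _ = L := by field_simp
  have hsq1 : Real.sqrt (lam * b / L) ≤ 1 := Real.sqrt_le_one.mpr h1
  -- bounds on w = v - v'
  have hw2 : ∀ l, |v l - v' l| ≤ 2 := by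
    intro l
    have h1 := hv l; have h2 := hv' l
    simp only [Set.mem_Icc] at h1 h2
    rw [abs_le]; constructor <;> linarith [h1.1, h1.2, h2.1, h2.2]
  have hθw : ∀ l, |θ * (v l - v' l)| ≤ 1 := by
    intro l
    rw [abs_mul, abs_of_nonneg hθ0]
    calc θ * |v l - v' l| ≤ θ * 2 := mul_le_mul_of_nonneg_left (hw2 l) hθ0
      _ = Real.sqrt (lam * b / L) := by rw [hθdef]; ring
      _ ≤ 1 := hsq1
  have hθw' : ∀ l, |θ * (v' l - v l)| ≤ 1 := by
    intro l
    have := hθw l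
    rwa [show θ * (v' l - v l) = -(θ * (v l - v' l)) by ring, abs_neg]
  have hS : ∑ l : Fin d, (v l - v' l) ^ 2 ≤ 2 * L := by
    calc ∑ l : Fin d, (v l - v' l) ^ 2 ≤ ∑ l : Fin d, 2 * |v l - v' l| := by
          refine Finset.sum_le_sum fun l _ => ?_
          nlinarith [sq_abs (v l - v' l), abs_nonneg (v l - v' l), hw2 l]
      _ = 2 * ∑ l : Fin d, |v l - v' l| := by rw [Finset.mul_sum]
      _ ≤ 2 * L := by linarith
  have hS' : ∑ l : Fin d, (v' l - v l) ^ 2 ≤ 2 * L := by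
    calc ∑ l : Fin d, (v' l - v l) ^ 2 = ∑ l : Fin d, (v l - v' l) ^ 2 :=
          Finset.sum_congr rfl fun l _ => by ring
      _ ≤ 2 * L := hS
  -- exponent computation
  have hθsq : θ ^ 2 = lam * b / L / 4 := by
    rw [hθdef, div_pow, Real.sq_sqrt (by positivity)]; norm_num
  have hθt : θ * t = 3 / 2 * lam := by
    rw [hθdef, htdef]
    rw [show Real.sqrt (lam * b / L) / 2 * (3 * Real.sqrt (L * lam / b))
        = 3 / 2 * (Real.sqrt (lam * b / L) * Real.sqrt (L * lam / b)) by ring]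
    rw [← Real.sqrt_mul (by positivity)]
    rw [show lam * b / L * (L * lam / b) = lam * lam by field_simp]
    rw [Real.sqrt_mul_self hlam0.le]
  have hexpo : ∀ S : ℝ, S ≤ 2 * L → θ ^ 2 * S / b - θ * t ≤ -lam := by
    intro S hSle
    have h2 : θ ^ 2 * S / b ≤ θ ^ 2 * (2 * L) / b := by gcongr
    have h3 : θ ^ 2 * (2 * L) / b = lam / 2 := by
      rw [hθsq]; field_simp; ring
    rw [hθt]; linarith [h2, h3]
  -- per-bin probability bound
  set N : ℝ := (Fintype.card ((Fin d → Fin b) × (Fin d → Bool)) : ℝ) with hN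
  have hN0 : 0 < N := by
    have : 0 < Fintype.card ((Fin d → Fin b) × (Fin d → Bool)) :=
      Fintype.card_pos_iff.mpr ⟨(fun _ => ⟨0, hb⟩, fun _ => true)⟩
    rw [hN]; exact_mod_cast this
  have hexplam : Real.exp (-lam) = δ / (2 * b) := by
    rw [hlamdef, Real.exp_neg, Real.exp_log (by positivity)]
    field_simp
  have hbin : ∀ (u : Fin d → ℝ), (∀ l, |θ * u l| ≤ 1) → (∑ l, (u l) ^ 2 ≤ 2 * L) →
      ∀ j : Fin b,
      ((Finset.univ.filter (fun ω : (Fin d → Fin b) × (Fin d → Bool) =>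
          t < ∑ l : Fin d, (if ω.1 l = j then (1 : ℝ) else 0) *
              (if ω.2 l then (1 : ℝ) else -1) * u l)).card : ℝ)
        ≤ N * (δ / (2 * b)) := by
    intro u hu1 hu2 j
    calc ((Finset.univ.filter (fun ω : (Fin d → Fin b) × (Fin d → Bool) =>
          t < ∑ l : Fin d, (if ω.1 l = j then (1 : ℝ) else 0) *
              (if ω.2 l then (1 : ℝ) else -1) * u l)).card : ℝ)
        ≤ N * Real.exp (θ ^ 2 * (∑ l, (u l) ^ 2) / b - θ * t) :=
          chernoff_bin d b hb θ t hθ0 u hu1 j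
      _ ≤ N * Real.exp (-lam) := by
          refine mul_le_mul_of_nonneg_left ?_ hN0.le
          exact Real.exp_le_exp.2 (hexpo _ hu2)
      _ = N * (δ / (2 * b)) := by rw [hexplam]
  -- threshold relation
  have hbt : (b : ℝ) * t = 3 * Real.sqrt (b * L * lam) := by
    rw [htdef]
    have hkey : (b:ℝ) * Real.sqrt (L * lam / b) = Real.sqrt ((b:ℝ) ^ 2 * (L * lam / b)) := by
      rw [Real.sqrt_mul (by positivity), Real.sqrt_sq hb0.le]
    rw [show (b:ℝ) * (3 * Real.sqrt (L * lam / b)) = 3 * ((b:ℝ) * Real.sqrt (L * lam / b)) by ring,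
      hkey]
    congr 2
    field_simp
  -- union bound
  set E := Finset.univ.filter (fun ω : (Fin d → Fin b) × (Fin d → Bool) =>
        3 * Real.sqrt (b * L * lam) <
          ∑ j : Fin b,
            |(∑ l : Fin d, (if ω.1 l = j then (1 : ℝ) else 0) *
                (if ω.2 l then (1 : ℝ) else -1) * v l) -
              (∑ l : Fin d, (if ω.1 l = j then (1 : ℝ) else 0) *
                (if ω.2 l then (1 : ℝ) else -1) * v' l)|) with hE
  set A : Fin b → Finset ((Fin d → Fin b) × (Fin d → Bool)) := fun j =>
    Finset.univ.filter (fun ω =>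
      t < ∑ l : Fin d, (if ω.1 l = j then (1 : ℝ) else 0) *
          (if ω.2 l then (1 : ℝ) else -1) * (v l - v' l)) with hA
  set B : Fin b → Finset ((Fin d → Fin b) × (Fin d → Bool)) := fun j =>
    Finset.univ.filter (fun ω =>
      t < ∑ l : Fin d, (if ω.1 l = j then (1 : ℝ) else 0) *
          (if ω.2 l then (1 : ℝ) else -1) * (v' l - v l)) with hB
  have hD : ∀ (j : Fin b) (ω : (Fin d → Fin b) × (Fin d → Bool)),
      (∑ l : Fin d, (if ω.1 l = j then (1 : ℝ) else 0) *
          (if ω.2 l then (1 : ℝ) else -1) * v l) -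
        (∑ l : Fin d, (if ω.1 l = j then (1 : ℝ) else 0) *
          (if ω.2 l then (1 : ℝ) else -1) * v' l)
      = ∑ l : Fin d, (if ω.1 l = j then (1 : ℝ) else 0) *
          (if ω.2 l then (1 : ℝ) else -1) * (v l - v' l) := by
    intro j ω
    rw [← Finset.sum_sub_distrib]
    exact Finset.sum_congr rfl fun l _ => by ring
  have hDneg : ∀ (j : Fin b) (ω : (Fin d → Fin b) × (Fin d → Bool)),
      (∑ l : Fin d, (if ω.1 l = j then (1 : ℝ) else 0) *
          (if ω.2 l then (1 : ℝ) else -1) * (v' l - v l))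
      = -(∑ l : Fin d, (if ω.1 l = j then (1 : ℝ) else 0) *
          (if ω.2 l then (1 : ℝ) else -1) * (v l - v' l)) := by
    intro j ω
    rw [← Finset.sum_neg_distrib]
    exact Finset.sum_congr rfl fun l _ => by ring
  have hsubset : E ⊆ Finset.univ.biUnion (fun j => A j ∪ B j) := by
    intro ω hω
    rw [hE, Finset.mem_filter] at hω
    by_contra hc
    simp only [Finset.mem_biUnion, Finset.mem_univ, true_and, not_exists,
      Finset.mem_union, not_or, hA, hB, Finset.mem_filter, not_lt, not_and] at hc
    have hall : ∀ j : Fin b,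
        |(∑ l : Fin d, (if ω.1 l = j then (1 : ℝ) else 0) *
            (if ω.2 l then (1 : ℝ) else -1) * v l) -
          (∑ l : Fin d, (if ω.1 l = j then (1 : ℝ) else 0) *
            (if ω.2 l then (1 : ℝ) else -1) * v' l)| ≤ t := by
      intro j
      have h1 := (hc j).1
      have h2 := (hc j).2
      rw [hDneg j ω] at h2
      rw [hD j ω, abs_le]
      constructor <;> linarith
    have hsum : (∑ j : Fin b,
        |(∑ l : Fin d, (if ω.1 l = j then (1 : ℝ) else 0) *
            (if ω.2 l then (1 : ℝ) else -1) * v l) -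
          (∑ l : Fin d, (if ω.1 l = j then (1 : ℝ) else 0) *
            (if ω.2 l then (1 : ℝ) else -1) * v' l)|) ≤ (b : ℝ) * t := by
      calc _ ≤ ∑ _j : Fin b, t := Finset.sum_le_sum fun j _ => hall j
        _ = (b : ℝ) * t := by
            rw [Finset.sum_const, Finset.card_univ, Fintype.card_fin, nsmul_eq_mul]
    rw [← hbt] at hω
    linarith [hω.2]
  have hcard : (E.card : ℝ) ≤ N * δ := by
    have step1 : E.card ≤ ∑ j : Fin b, ((A j).card + (B j).card) := by
      calc E.card ≤ (Finset.univ.biUnion (fun j => A j ∪ B j)).card :=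
            Finset.card_le_card hsubset
        _ ≤ ∑ j : Fin b, (A j ∪ B j).card := Finset.card_biUnion_le
        _ ≤ ∑ j : Fin b, ((A j).card + (B j).card) :=
            Finset.sum_le_sum fun j _ => Finset.card_union_le _ _
    calc (E.card : ℝ) ≤ ∑ j : Fin b, (((A j).card : ℝ) + ((B j).card : ℝ)) := by
          exact_mod_cast step1
      _ ≤ ∑ _j : Fin b, (N * (δ / (2 * b)) + N * (δ / (2 * b))) := by
          refine Finset.sum_le_sum fun j _ => ?_
          have ha := hbin (fun l => v l - v' l) hθw hS j
          have hbb := hbin (fun l => v' l - v l) hθw' hS' j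
          exact add_le_add ha hbb
      _ = (b : ℝ) * (N * (δ / (2 * b)) + N * (δ / (2 * b))) := by
          rw [Finset.sum_const, Finset.card_univ, Fintype.card_fin, nsmul_eq_mul]
      _ = N * δ := by field_simp; ring
  rw [div_le_iff₀ hN0]
  calc (E.card : ℝ) ≤ N * δ := hcard
    _ = δ * N := by ring
end

section
/- Let ε > 0, λ > 0, δ ∈ [0,1], let (Ω, P) be a probability space, and let B, B′ : Ω → ℝ^b be measurable maps with P({ω : ∑_{j=1}^{b} |B_j(ω) − B′_j(ω)| > λ}) ≤ δ. Define probability measures ν and ν′ on Ω × ℝ^b by ν(S) = ∫_Ω ( ⊗_{j=1}^{b} Lap(B_j(ω), λ/ε) )( {y ∈ ℝ^b : (ω,y) ∈ S} ) dP(ω) and ν′(S) = ∫_Ω ( ⊗_{j=1}^{b} Lap(B′_j(ω), λ/ε) )( {y ∈ ℝ^b : (ω,y) ∈ S} ) dP(ω). Then for every measurable S ⊆ Ω × ℝ^b, ν(S) ≤ exp(ε)·ν′(S) + δ; that is, ν and ν′ are (ε,δ)-close. -/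
open MeasureTheory Real Set
open scoped ENNReal

/-- The Laplace measure `Lap(c, β)` on `ℝ`: density `x ↦ (1/(2β))·exp(−|x−c|/β)`
with respect to Lebesgue measure. -/
noncomputable def laplaceMeasure (c β : ℝ) : Measure ℝ :=
  volume.withDensity (fun x => ENNReal.ofReal ((1 / (2 * β)) * Real.exp (-|x - c| / β)))

lemma integrable_exp_neg_abs' : Integrable (fun y : ℝ => Real.exp (-|y|)) := by
  rw [← integrableOn_univ, ← Set.Iic_union_Ioi (a := (0:ℝ)), integrableOn_union]
  constructor
  · exact (integrableOn_exp_Iic 0).congr_fun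
      (fun y hy => by rw [abs_of_nonpos hy, neg_neg]) measurableSet_Iic
  · exact (exp_neg_integrableOn_Ioi 0 one_pos).congr_fun
      (fun y hy => by beta_reduce; rw [abs_of_pos hy, neg_one_mul]) measurableSet_Ioi

lemma integral_exp_neg_abs' : ∫ y : ℝ, Real.exp (-|y|) = 2 := by
  have : ∫ y : ℝ, Real.exp (-|y|) = 2 * ∫ x in Ioi (0:ℝ), Real.exp (-x) :=
    integral_comp_abs (f := fun t => Real.exp (-t))
  rw [this, integral_exp_neg_Ioi_zero, mul_one]

lemma integrable_lap_density (c β : ℝ) (hβ : 0 < β) :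
    Integrable (fun x : ℝ => Real.exp (-|x - c| / β)) := by
  have h1 : Integrable (fun y : ℝ => Real.exp (-|β⁻¹ * y|)) :=
    (integrable_comp_mul_left_iff (fun y : ℝ => Real.exp (-|y|))
      (by positivity : β⁻¹ ≠ 0)).mpr integrable_exp_neg_abs'
  have h2 := h1.comp_sub_right c
  refine h2.congr (Filter.Eventually.of_forall fun x => ?_)
  simp only
  rw [abs_mul, abs_of_pos (inv_pos.2 hβ)]
  congr 1
  field_simp

lemma integral_lap_density (c β : ℝ) (hβ : 0 < β) :
    ∫ x : ℝ, Real.exp (-|x - c| / β) = 2 * β := by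
  have h0 : (fun x : ℝ => Real.exp (-|x - c| / β))
      = fun x : ℝ => (fun y : ℝ => Real.exp (-|y| / β)) (x - c) := rfl
  rw [h0, integral_sub_right_eq_self (fun y : ℝ => Real.exp (-|y| / β)) c]
  have h1 : ∫ y : ℝ, Real.exp (-|y| / β) = 2 * ∫ x in Ioi (0:ℝ), Real.exp (-x / β) :=
    integral_comp_abs (f := fun t => Real.exp (-t / β))
  rw [h1]
  have h2 : ∫ x in Ioi (0:ℝ), Real.exp (-x / β)
      = ∫ x in Ioi (0:ℝ), (fun t => Real.exp (-t)) (β⁻¹ * x) := by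
    refine setIntegral_congr_fun measurableSet_Ioi fun x _ => ?_
    simp only [neg_div]
    rw [div_eq_inv_mul]
  rw [h2, integral_comp_mul_left_Ioi (fun t => Real.exp (-t)) 0 (inv_pos.2 hβ)]
  rw [mul_zero, integral_exp_neg_Ioi_zero, inv_inv, smul_eq_mul, mul_one]

lemma laplaceMeasure_univ (c β : ℝ) (hβ : 0 < β) : laplaceMeasure c β Set.univ = 1 := by
  rw [laplaceMeasure, withDensity_apply _ MeasurableSet.univ, Measure.restrict_univ]
  have hint : Integrable (fun x : ℝ => (1 / (2 * β)) * Real.exp (-|x - c| / β)) :=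
    (integrable_lap_density c β hβ).const_mul _
  rw [← ofReal_integral_eq_lintegral_ofReal hint
      (Filter.Eventually.of_forall fun x => by positivity)]
  rw [MeasureTheory.integral_const_mul, integral_lap_density c β hβ]
  rw [one_div, inv_mul_cancel₀ (by positivity)]
  exact ENNReal.ofReal_one

theorem laplace_prob (c β : ℝ) (hβ : 0 < β) : IsProbabilityMeasure (laplaceMeasure c β) :=
  ⟨laplaceMeasure_univ c β hβ⟩

lemma laplaceMeasure_le (c c' β : ℝ) (hβ : 0 < β) :
    laplaceMeasure c β ≤ ENNReal.ofReal (Real.exp (|c - c'| / β)) • laplaceMeasure c' β := by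
  rw [laplaceMeasure, laplaceMeasure, ← withDensity_smul' _ _ ENNReal.ofReal_ne_top]
  refine withDensity_mono (Filter.Eventually.of_forall fun x => ?_)
  simp only [Pi.smul_apply, smul_eq_mul]
  rw [← ENNReal.ofReal_mul (Real.exp_nonneg _)]
  refine ENNReal.ofReal_le_ofReal ?_
  have hk : (0:ℝ) ≤ 1 / (2 * β) := by positivity
  have hexp : Real.exp (-|x - c| / β) ≤ Real.exp (|c - c'| / β) * Real.exp (-|x - c'| / β) := by
    rw [← Real.exp_add, ← add_div]
    refine Real.exp_le_exp.mpr ?_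
    have htri : |x - c'| ≤ |x - c| + |c - c'| := abs_sub_le x c c'
    have : -|x - c| ≤ |c - c'| + -|x - c'| := by linarith
    gcongr
  calc 1 / (2 * β) * Real.exp (-|x - c| / β)
      ≤ 1 / (2 * β) * (Real.exp (|c - c'| / β) * Real.exp (-|x - c'| / β)) :=
        mul_le_mul_of_nonneg_left hexp hk
    _ = Real.exp (|c - c'| / β) * (1 / (2 * β) * Real.exp (-|x - c'| / β)) := by ring

lemma measure_pi_mono {ι : Type*} [Fintype ι] {α : ι → Type*} [∀ i, MeasurableSpace (α i)]
    {μ ν : ∀ i, Measure (α i)} (h : ∀ i, μ i ≤ ν i) : Measure.pi μ ≤ Measure.pi ν := by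
  refine Measure.le_iff.mpr fun s hs => ?_
  rw [Measure.pi, Measure.pi, toMeasure_apply _ _ hs, toMeasure_apply _ _ hs]
  rw [OuterMeasure.pi, OuterMeasure.pi]
  refine le_trans ?_ le_rfl
  revert s hs
  suffices H : OuterMeasure.boundedBy (piPremeasure fun i => (μ i).toOuterMeasure)
      ≤ OuterMeasure.boundedBy (piPremeasure fun i => (ν i).toOuterMeasure) by
    intro s _; exact H s
  refine OuterMeasure.le_boundedBy'.mpr fun t _ => ?_
  refine (OuterMeasure.boundedBy_le t).trans ?_
  exact Finset.prod_le_prod' fun i _ => (h i) _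

lemma measure_pi_smul {ι : Type*} [Fintype ι] {α : ι → Type*} [∀ i, MeasurableSpace (α i)]
    (c : ι → ℝ≥0∞) (hc : ∀ i, c i ≠ ⊤) (ν : ∀ i, Measure (α i)) [∀ i, IsFiniteMeasure (ν i)] :
    Measure.pi (fun i => c i • ν i) = (∏ i, c i) • Measure.pi ν := by
  haveI : ∀ i, SigmaFinite (c i • ν i) := fun i => by
    haveI : IsFiniteMeasure (c i • ν i) :=
      ⟨by rw [Measure.smul_apply, smul_eq_mul]
          exact ENNReal.mul_lt_top (hc i).lt_top (measure_lt_top _ _)⟩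
    infer_instance
  refine Measure.pi_eq (μ := fun i => c i • ν i) fun s hs => ?_
  simp [Measure.pi_pi, Finset.prod_mul_distrib]

/-- Let `ε > 0`, `λ > 0`, `δ ∈ [0,1]`, `(Ω, P)` a probability space,
and `B, B' : Ω → ℝ^b` measurable with `P(∑_j |B_j − B'_j| > λ) ≤ δ`. Then the measures
`ν(S) = ∫_Ω ⊗_j Lap(B_j(ω), λ/ε) ({y : (ω,y) ∈ S}) dP(ω)` and the analogous `ν'`
(with `B'`) satisfy `ν(S) ≤ exp(ε)·ν'(S) + δ` for every measurable `S`. -/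
theorem laplace_mechanism_close {Ω : Type*} [MeasurableSpace Ω]
    (P : Measure Ω) [IsProbabilityMeasure P]
    (b : ℕ) (ε lam δ : ℝ) (hε : 0 < ε) (hlam : 0 < lam) (hδ0 : 0 ≤ δ) (hδ1 : δ ≤ 1)
    (B B' : Ω → Fin b → ℝ) (hB : Measurable B) (hB' : Measurable B')
    (hclose : P {ω | lam < ∑ j : Fin b, |B ω j - B' ω j|} ≤ ENNReal.ofReal δ)
    (S : Set (Ω × (Fin b → ℝ))) (hS : MeasurableSet S) :
    ∫⁻ ω, (Measure.pi fun j : Fin b => laplaceMeasure (B ω j) (lam / ε)) {y | (ω, y) ∈ S} ∂P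
      ≤ ENNReal.ofReal (Real.exp ε) *
          ∫⁻ ω, (Measure.pi fun j : Fin b => laplaceMeasure (B' ω j) (lam / ε))
            {y | (ω, y) ∈ S} ∂P
        + ENNReal.ofReal δ := by
  set β := lam / ε with hβdef
  have hβ : 0 < β := div_pos hlam hε
  set G := {ω | lam < ∑ j : Fin b, |B ω j - B' ω j|} with hGdef
  have hGmeas : MeasurableSet G := by
    have hm : Measurable fun ω => ∑ j : Fin b, |B ω j - B' ω j| := by
      apply Finset.measurable_sum
      intro j _
      exact (((measurable_pi_apply j).comp hB).sub ((measurable_pi_apply j).comp hB')).abs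
    exact measurableSet_lt measurable_const hm
  have hone : ∀ ω, (Measure.pi fun j : Fin b => laplaceMeasure (B ω j) β) {y | (ω, y) ∈ S}
      ≤ 1 := by
    intro ω
    haveI := fun j : Fin b => laplace_prob (B ω j) β hβ
    exact prob_le_one
  have hgood : ∀ ω ∉ G,
      (Measure.pi fun j : Fin b => laplaceMeasure (B ω j) β) {y | (ω, y) ∈ S}
        ≤ ENNReal.ofReal (Real.exp ε) *
          (Measure.pi fun j : Fin b => laplaceMeasure (B' ω j) β) {y | (ω, y) ∈ S} := by
    intro ω hω
    haveI := fun j : Fin b => laplace_prob (B' ω j) β hβ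
    have hle : Measure.pi (fun j : Fin b => laplaceMeasure (B ω j) β)
        ≤ (∏ j : Fin b, ENNReal.ofReal (Real.exp (|B ω j - B' ω j| / β))) •
          Measure.pi (fun j : Fin b => laplaceMeasure (B' ω j) β) := by
      rw [← measure_pi_smul _ (fun j => ENNReal.ofReal_ne_top) _]
      exact measure_pi_mono fun j => laplaceMeasure_le _ _ _ hβ
    have hc : (∏ j : Fin b, ENNReal.ofReal (Real.exp (|B ω j - B' ω j| / β)))
        ≤ ENNReal.ofReal (Real.exp ε) := by
      rw [← ENNReal.ofReal_prod_of_nonneg (fun j _ => Real.exp_nonneg _), ← Real.exp_sum]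
      refine ENNReal.ofReal_le_ofReal (Real.exp_le_exp.mpr ?_)
      have hsum : ∑ j : Fin b, |B ω j - B' ω j| ≤ lam := not_lt.mp hω
      rw [← Finset.sum_div]
      calc (∑ j : Fin b, |B ω j - B' ω j|) / β ≤ lam / β := by gcongr
        _ = ε := by rw [hβdef]; field_simp
    calc (Measure.pi fun j : Fin b => laplaceMeasure (B ω j) β) {y | (ω, y) ∈ S}
        ≤ ((∏ j : Fin b, ENNReal.ofReal (Real.exp (|B ω j - B' ω j| / β))) •
            Measure.pi (fun j : Fin b => laplaceMeasure (B' ω j) β)) {y | (ω, y) ∈ S} :=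
          hle _
      _ = (∏ j : Fin b, ENNReal.ofReal (Real.exp (|B ω j - B' ω j| / β))) *
            (Measure.pi fun j : Fin b => laplaceMeasure (B' ω j) β) {y | (ω, y) ∈ S} := by
          rw [Measure.smul_apply, smul_eq_mul]
      _ ≤ _ := mul_le_mul_left hc _
  calc ∫⁻ ω, (Measure.pi fun j : Fin b => laplaceMeasure (B ω j) β) {y | (ω, y) ∈ S} ∂P
      ≤ ∫⁻ ω, (G.indicator (1 : Ω → ℝ≥0∞) ω + ENNReal.ofReal (Real.exp ε) *
          (Measure.pi fun j : Fin b => laplaceMeasure (B' ω j) β) {y | (ω, y) ∈ S}) ∂P := by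
        refine lintegral_mono fun ω => ?_
        by_cases hω : ω ∈ G
        · rw [Set.indicator_of_mem hω]
          exact (hone ω).trans le_self_add
        · rw [Set.indicator_of_notMem hω, zero_add]
          exact hgood ω hω
    _ = P G + ENNReal.ofReal (Real.exp ε) *
          ∫⁻ ω, (Measure.pi fun j : Fin b => laplaceMeasure (B' ω j) β) {y | (ω, y) ∈ S} ∂P := by
        rw [lintegral_add_left (measurable_one.indicator hGmeas),
          lintegral_indicator_one hGmeas, lintegral_const_mul' _ _ ENNReal.ofReal_ne_top]
    _ ≤ _ := by
        rw [add_comm]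
        exact add_le_add le_rfl hclose
end

section
/- Let d and b be positive integers, let v ∈ ℝ^d, let h(1),…,h(d) be i.i.d. uniform on {1,…,b} and s(1),…,s(d) be i.i.d. uniform on {−1,+1}, with h and s independent, and fix j ∈ {1,…,b}. Then the bin value B_j = ∑_{l=1}^d 1[h(l)=j]·s(l)·v_l satisfies, for every t ∈ ℝ, E[exp(t·B_j)] ≤ exp( t²·(∑_{l=1}^d v_l²)/2 ). In particular, if v is k-sparse with all entries in [−1,1], then E[exp(t·B_j)] ≤ exp(k·t²/2) for all t ∈ ℝ. -/
/-- Per-coordinate MGF bound: the sum over a single coordinate's hash/sign pair. -/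
lemma coord_sum_le (b : ℕ) (hb : 0 < b) (j : Fin b) (t c : ℝ) :
    (∑ a : Fin b × Bool,
        Real.exp (t * ((if a.1 = j then (1 : ℝ) else 0) *
          (if a.2 then (1 : ℝ) else -1) * c)))
      ≤ (2 * b) * Real.exp (t ^ 2 * c ^ 2 / 2) := by
  rw [Fintype.sum_prod_type]
  have hsum : ∀ i : Fin b, (∑ s : Bool,
      Real.exp (t * ((if i = j then (1 : ℝ) else 0) *
        (if s then (1 : ℝ) else -1) * c)))
      = if i = j then Real.exp (t * c) + Real.exp (-(t * c)) else 2 := by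
    intro i
    by_cases h : i = j <;> simp [h, Fintype.sum_bool, mul_comm, mul_assoc, mul_left_comm]
  simp only [hsum]
  have hA : Real.exp (t * c) + Real.exp (-(t * c)) ≤ 2 * Real.exp (t ^ 2 * c ^ 2 / 2) := by
    have h := Real.cosh_le_exp_half_sq (t * c)
    rw [Real.cosh_eq] at h
    have h2 : (t * c) ^ 2 / 2 = t ^ 2 * c ^ 2 / 2 := by ring
    rw [h2] at h
    linarith
  have hE : (1 : ℝ) ≤ Real.exp (t ^ 2 * c ^ 2 / 2) := Real.one_le_exp (by positivity)
  have hb1 : (1 : ℝ) ≤ (b : ℝ) := by exact_mod_cast hb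
  have hs : (∑ x : Fin b, if x = j then Real.exp (t * c) + Real.exp (-(t * c)) else (2 : ℝ))
      = (Real.exp (t * c) + Real.exp (-(t * c)) - 2) + 2 * b := by
    have hx : ∀ x : Fin b, (if x = j then Real.exp (t * c) + Real.exp (-(t * c)) else (2 : ℝ))
        = (if x = j then Real.exp (t * c) + Real.exp (-(t * c)) - 2 else 0) + 2 := by
      intro x; by_cases h : x = j <;> simp [h]
    simp only [hx, Finset.sum_add_distrib,
      Finset.sum_ite_eq' Finset.univ j
        (fun _ => Real.exp (t * c) + Real.exp (-(t * c)) - 2),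
      Finset.mem_univ, if_true, Finset.sum_const, Finset.card_univ, Fintype.card_fin,
      nsmul_eq_mul]
    ring
  rw [hs]
  nlinarith

/-- For `v ∈ ℝ^d`, a uniformly random hash pair `(h,s)` (hash values
i.i.d. uniform on `{1,…,b}`, signs i.i.d. uniform on `{−1,+1}`, independent), and a
fixed bin `j`, the bin value `B_j = ∑_l 1[h(l)=j]·s(l)·v_l` satisfies
`E[exp(t·B_j)] ≤ exp(t²·(∑_l v_l²)/2)` for all `t`.  In particular, if `v` is
`k`-sparse with entries in `[−1,1]`, then `E[exp(t·B_j)] ≤ exp(k·t²/2)` for all `t`. -/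
theorem bin_value_subGaussian_mgf (d b k : ℕ) (hd : 0 < d) (hb : 0 < b) (hk : 0 < k)
    (v : Fin d → ℝ) (j : Fin b) :
    (∀ t : ℝ,
      (∑ ω : (Fin d → Fin b) × (Fin d → Bool),
          Real.exp (t * ∑ l : Fin d, (if ω.1 l = j then (1 : ℝ) else 0) *
            (if ω.2 l then (1 : ℝ) else -1) * v l))
        / (Fintype.card ((Fin d → Fin b) × (Fin d → Bool)) : ℝ)
        ≤ Real.exp (t ^ 2 * (∑ l : Fin d, (v l) ^ 2) / 2))
    ∧ (((Finset.univ.filter (fun l => v l ≠ 0)).card ≤ k ∧ ∀ l, |v l| ≤ 1) →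
        ∀ t : ℝ,
          (∑ ω : (Fin d → Fin b) × (Fin d → Bool),
              Real.exp (t * ∑ l : Fin d, (if ω.1 l = j then (1 : ℝ) else 0) *
                (if ω.2 l then (1 : ℝ) else -1) * v l))
            / (Fintype.card ((Fin d → Fin b) × (Fin d → Bool)) : ℝ)
            ≤ Real.exp (k * t ^ 2 / 2)) := by
  have main : ∀ t : ℝ,
      (∑ ω : (Fin d → Fin b) × (Fin d → Bool),
          Real.exp (t * ∑ l : Fin d, (if ω.1 l = j then (1 : ℝ) else 0) *
            (if ω.2 l then (1 : ℝ) else -1) * v l))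
        / (Fintype.card ((Fin d → Fin b) × (Fin d → Bool)) : ℝ)
        ≤ Real.exp (t ^ 2 * (∑ l : Fin d, (v l) ^ 2) / 2) := by
    intro t
    have hcard : (Fintype.card ((Fin d → Fin b) × (Fin d → Bool)) : ℝ) = (2 * b) ^ d := by
      simp [Fintype.card_prod, Fintype.card_fun, mul_pow, mul_comm]
    -- factorize the sum
    have hfac : (∑ ω : (Fin d → Fin b) × (Fin d → Bool),
          Real.exp (t * ∑ l : Fin d, (if ω.1 l = j then (1 : ℝ) else 0) *
            (if ω.2 l then (1 : ℝ) else -1) * v l))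
        = ∏ l : Fin d, ∑ a : Fin b × Bool,
            Real.exp (t * ((if a.1 = j then (1 : ℝ) else 0) *
              (if a.2 then (1 : ℝ) else -1) * v l)) := by
      rw [Fintype.prod_sum]
      rw [← Equiv.sum_comp (Equiv.arrowProdEquivProdArrow (Fin d) (fun _ => Fin b) (fun _ => Bool)).symm]
      apply Finset.sum_congr rfl
      intro g _
      rw [Finset.mul_sum, Real.exp_sum]
      rfl
    have hbound : (∏ l : Fin d, ∑ a : Fin b × Bool,
            Real.exp (t * ((if a.1 = j then (1 : ℝ) else 0) *
              (if a.2 then (1 : ℝ) else -1) * v l)))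
        ≤ ∏ l : Fin d, (2 * b) * Real.exp (t ^ 2 * (v l) ^ 2 / 2) := by
      apply Finset.prod_le_prod
      · intro l _
        exact Finset.sum_nonneg fun a _ => (Real.exp_pos _).le
      · intro l _
        exact coord_sum_le b hb j t (v l)
    rw [hfac, hcard, div_le_iff₀ (by positivity)]
    calc (∏ l : Fin d, ∑ a : Fin b × Bool,
            Real.exp (t * ((if a.1 = j then (1 : ℝ) else 0) *
              (if a.2 then (1 : ℝ) else -1) * v l)))
        ≤ ∏ l : Fin d, (2 * b) * Real.exp (t ^ 2 * (v l) ^ 2 / 2) := hbound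
      _ = Real.exp (t ^ 2 * (∑ l : Fin d, (v l) ^ 2) / 2) * (2 * b) ^ d := by
          rw [Finset.prod_mul_distrib, Finset.prod_const, ← Real.exp_sum]
          rw [Finset.card_univ, Fintype.card_fin, mul_comm]
          congr 2
          simp only [Finset.mul_sum, Finset.sum_div]
  refine ⟨main, fun ⟨hsupp, habs⟩ t => ?_⟩
  refine (main t).trans (Real.exp_le_exp.2 ?_)
  have hsum : (∑ l : Fin d, (v l) ^ 2) ≤ k := by
    have h1 : (∑ l : Fin d, (v l) ^ 2)
        = ∑ l ∈ Finset.univ.filter (fun l => v l ≠ 0), (v l) ^ 2 := by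
      rw [Finset.sum_filter_of_ne]
      intro l _ h
      intro hv
      exact h (by rw [hv]; ring)
    rw [h1]
    calc (∑ l ∈ Finset.univ.filter (fun l => v l ≠ 0), (v l) ^ 2)
        ≤ ∑ l ∈ Finset.univ.filter (fun l => v l ≠ 0), 1 := by
          apply Finset.sum_le_sum
          intro l _
          have := habs l
          nlinarith [abs_nonneg (v l), sq_abs (v l)]
      _ = (Finset.univ.filter (fun l => v l ≠ 0)).card := by simp
      _ ≤ k := by exact_mod_cast hsupp
  have ht : (0:ℝ) ≤ t ^ 2 := sq_nonneg t
  nlinarith [mul_le_mul_of_nonneg_left hsum ht]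
end

section
/- Let d, b, k be positive integers, let v ∈ [−1,1]^d be k-sparse, let h(1),…,h(d) be i.i.d. uniform on {1,…,b} and s(1),…,s(d) be i.i.d. uniform on {−1,+1}, with h and s independent, and fix j ∈ {1,…,b}. Then the bin value B_j = ∑_{l=1}^d 1[h(l)=j]·s(l)·v_l satisfies, for every η > 0, Pr[ |B_j| ≥ η ] ≤ 2·exp(−η²/(2k)). -/
open Finset

/-- Factorization of a sum of products over a function space. -/
lemma pi_sum_prod {d : ℕ} {A : Type*} [Fintype A] [DecidableEq A] (g : Fin d → A → ℝ) :
    ∑ h : Fin d → A, ∏ l, g l (h l) = ∏ l, ∑ a : A, g l a := by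
  symm
  rw [Finset.prod_univ_sum, Fintype.piFinset_univ]

lemma sum_prod_factor {d : ℕ} {A B : Type*} [Fintype A] [DecidableEq A] [Fintype B]
    [DecidableEq B] (f : Fin d → A → B → ℝ) :
    ∑ ω : (Fin d → A) × (Fin d → B), ∏ l, f l (ω.1 l) (ω.2 l)
      = ∏ l, ∑ a : A, ∑ β : B, f l a β := by
  rw [← Finset.univ_product_univ, Finset.sum_product]
  have h1 : ∀ h : Fin d → A, ∑ s : Fin d → B, ∏ l, f l (h l) (s l)
      = ∏ l, ∑ β : B, f l (h l) β := fun h => pi_sum_prod _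
  rw [Finset.sum_congr rfl fun h _ => h1 h]
  exact pi_sum_prod (fun l a => ∑ β : B, f l a β)

/-- One-sided Chernoff bound for a single bin value, in counting form. -/
lemma one_sided (d b k : ℕ) (hb : 0 < b) (hk : 0 < k) (w : Fin d → ℝ)
    (hw2 : ∑ l, w l ^ 2 ≤ (k : ℝ)) (j : Fin b) (η : ℝ) (hη : 0 < η) :
    ((Finset.univ.filter (fun ω : (Fin d → Fin b) × (Fin d → Bool) =>
        η ≤ ∑ l : Fin d, (if ω.1 l = j then (1 : ℝ) else 0) *
              (if ω.2 l then (1 : ℝ) else -1) * w l)).card : ℝ)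
      ≤ (Fintype.card ((Fin d → Fin b) × (Fin d → Bool)) : ℝ)
        * Real.exp (-η ^ 2 / (2 * k)) := by
  set t : ℝ := η / k with ht_def
  have hkR : (0:ℝ) < k := by exact_mod_cast hk
  have ht : 0 < t := div_pos hη hkR
  set B : (Fin d → Fin b) × (Fin d → Bool) → ℝ := fun ω =>
    ∑ l : Fin d, (if ω.1 l = j then (1 : ℝ) else 0) *
      (if ω.2 l then (1 : ℝ) else -1) * w l with hB
  -- Step 1: card ≤ exp(-tη) * ∑ exp(t B ω)
  have step1 : ((Finset.univ.filter (fun ω => η ≤ B ω)).card : ℝ)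
      ≤ Real.exp (-(t*η)) * ∑ ω : (Fin d → Fin b) × (Fin d → Bool), Real.exp (t * B ω) := by
    rw [Finset.mul_sum]
    calc ((Finset.univ.filter (fun ω => η ≤ B ω)).card : ℝ)
        = ∑ ω ∈ Finset.univ.filter (fun ω => η ≤ B ω), (1:ℝ) := by simp
      _ ≤ ∑ ω ∈ Finset.univ.filter (fun ω => η ≤ B ω),
            Real.exp (-(t*η)) * Real.exp (t * B ω) := by
          apply Finset.sum_le_sum
          intro ω hω
          rw [Finset.mem_filter] at hω
          rw [← Real.exp_add]
          have : (0:ℝ) ≤ -(t*η) + t * B ω := by nlinarith [hω.2]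
          calc (1:ℝ) = Real.exp 0 := (Real.exp_zero).symm
            _ ≤ Real.exp (-(t*η) + t * B ω) := Real.exp_le_exp.2 this
      _ ≤ ∑ ω : (Fin d → Fin b) × (Fin d → Bool),
            Real.exp (-(t*η)) * Real.exp (t * B ω) := by
          apply Finset.sum_le_sum_of_subset_of_nonneg (Finset.filter_subset _ _)
          intro ω _ _
          positivity
  -- Step 2: factor the MGF
  have step2 : ∑ ω : (Fin d → Fin b) × (Fin d → Bool), Real.exp (t * B ω)
      = ∏ l, ∑ a : Fin b, ∑ β : Bool,
          Real.exp (t * ((if a = j then (1:ℝ) else 0) * (if β then (1:ℝ) else -1) * w l)) := by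
    rw [← sum_prod_factor]
    apply Finset.sum_congr rfl
    intro ω _
    rw [hB]
    rw [Finset.mul_sum, Real.exp_sum]
  -- Step 3: per-coordinate bound
  have step3 : ∀ l : Fin d, ∑ a : Fin b, ∑ β : Bool,
      Real.exp (t * ((if a = j then (1:ℝ) else 0) * (if β then (1:ℝ) else -1) * w l))
      ≤ (b : ℝ) * (2 * Real.exp ((t * w l)^2 / 2)) := by
    intro l
    have hcosh : Real.exp (t * w l) + Real.exp (-(t * w l))
        ≤ 2 * Real.exp ((t * w l)^2 / 2) := by
      have := Real.cosh_le_exp_half_sq (t * w l)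
      rw [Real.cosh_eq] at this
      linarith
    have hone : (2:ℝ) ≤ 2 * Real.exp ((t * w l)^2 / 2) := by
      nlinarith [Real.one_le_exp (by positivity : (0:ℝ) ≤ (t * w l)^2 / 2)]
    calc ∑ a : Fin b, ∑ β : Bool,
          Real.exp (t * ((if a = j then (1:ℝ) else 0) * (if β then (1:ℝ) else -1) * w l))
        ≤ ∑ _a : Fin b, 2 * Real.exp ((t * w l)^2 / 2) := by
          apply Finset.sum_le_sum
          intro a _
          rw [Fintype.sum_bool]
          by_cases h : a = j
          · simp only [h, if_pos rfl, if_true, Bool.false_eq_true, if_false]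
            have e1 : t * (1 * 1 * w l) = t * w l := by ring
            have e2 : t * (1 * -1 * w l) = -(t * w l) := by ring
            rw [e1, e2]
            exact hcosh
          · simp only [if_neg h, zero_mul, mul_zero, Real.exp_zero]
            linarith
      _ = (b : ℝ) * (2 * Real.exp ((t * w l)^2 / 2)) := by
          rw [Finset.sum_const]
          simp [mul_comm]
  -- combine
  have hcard : (Fintype.card ((Fin d → Fin b) × (Fin d → Bool)) : ℝ)
      = ∏ _l : Fin d, ((b:ℝ) * 2) := by
    simp [Fintype.card_prod, Fintype.card_fun, Finset.prod_const, mul_pow]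
  have step4 : ∏ l, ∑ a : Fin b, ∑ β : Bool,
      Real.exp (t * ((if a = j then (1:ℝ) else 0) * (if β then (1:ℝ) else -1) * w l))
      ≤ (Fintype.card ((Fin d → Fin b) × (Fin d → Bool)) : ℝ) * Real.exp (t^2 * k / 2) := by
    calc ∏ l, ∑ a : Fin b, ∑ β : Bool,
          Real.exp (t * ((if a = j then (1:ℝ) else 0) * (if β then (1:ℝ) else -1) * w l))
        ≤ ∏ l, ((b:ℝ) * (2 * Real.exp ((t * w l)^2 / 2))) := by
          apply Finset.prod_le_prod
          · intro l _
            apply Finset.sum_nonneg; intro a _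
            apply Finset.sum_nonneg; intro β _
            positivity
          · intro l _; exact step3 l
      _ = (∏ _l : Fin d, ((b:ℝ) * 2)) * Real.exp (∑ l, (t * w l)^2 / 2) := by
          rw [Real.exp_sum, ← Finset.prod_mul_distrib]
          apply Finset.prod_congr rfl
          intro l _; ring
      _ ≤ (Fintype.card ((Fin d → Fin b) × (Fin d → Bool)) : ℝ) * Real.exp (t^2 * k / 2) := by
          rw [hcard]
          apply mul_le_mul_of_nonneg_left _ (by positivity)
          apply Real.exp_le_exp.2
          have : ∑ l, (t * w l)^2 / 2 = t^2 / 2 * ∑ l, w l ^ 2 := by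
            rw [Finset.mul_sum]
            apply Finset.sum_congr rfl
            intro l _; ring
          rw [this]
          nlinarith [sq_nonneg t]
  have hexp : Real.exp (-(t*η)) * Real.exp (t^2 * k / 2) = Real.exp (-η^2/(2*k)) := by
    rw [← Real.exp_add]
    congr 1
    field_simp [ht_def]
    rw [ht_def, div_mul_cancel₀ _ hkR.ne']; ring
  calc ((Finset.univ.filter (fun ω => η ≤ B ω)).card : ℝ)
      ≤ Real.exp (-(t*η)) * ∑ ω : (Fin d → Fin b) × (Fin d → Bool), Real.exp (t * B ω) := step1
    _ ≤ Real.exp (-(t*η)) * ((Fintype.card ((Fin d → Fin b) × (Fin d → Bool)) : ℝ)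
          * Real.exp (t^2 * k / 2)) := by
        apply mul_le_mul_of_nonneg_left _ (Real.exp_nonneg _)
        rw [step2]; exact step4
    _ = (Fintype.card ((Fin d → Fin b) × (Fin d → Bool)) : ℝ) * Real.exp (-η^2/(2*k)) := by
        rw [← hexp]; ring

/-- For `v ∈ [−1,1]^d` a `k`-sparse vector, a uniformly random hash
pair `(h,s)` (hash values i.i.d. uniform on `{1,…,b}`, signs i.i.d. uniform on
`{−1,+1}`, independent), and a fixed bin `j`, the bin value
`B_j = ∑_l 1[h(l)=j]·s(l)·v_l` satisfies `Pr[|B_j| ≥ η] ≤ 2·exp(−η²/(2k))` for every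
`η > 0`. -/
theorem bin_value_tail_bound (d b k : ℕ) (hd : 0 < d) (hb : 0 < b) (hk : 0 < k)
    (v : Fin d → ℝ)
    (hsparse : (Finset.univ.filter (fun l => v l ≠ 0)).card ≤ k)
    (hv : ∀ l, v l ∈ Set.Icc (-1 : ℝ) 1)
    (j : Fin b) (η : ℝ) (hη : 0 < η) :
    ((Finset.univ.filter (fun ω : (Fin d → Fin b) × (Fin d → Bool) =>
        η ≤ |∑ l : Fin d, (if ω.1 l = j then (1 : ℝ) else 0) *
              (if ω.2 l then (1 : ℝ) else -1) * v l|)).card : ℝ)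
      / (Fintype.card ((Fin d → Fin b) × (Fin d → Bool)) : ℝ)
      ≤ 2 * Real.exp (-η ^ 2 / (2 * k)) := by
  have hv2 : ∑ l, v l ^ 2 ≤ (k : ℝ) := by
    calc ∑ l, v l ^ 2 = ∑ l ∈ Finset.univ.filter (fun l => v l ≠ 0), v l ^ 2 := by
          symm
          apply Finset.sum_subset (Finset.filter_subset _ _)
          intro l _ hl
          simp only [Finset.mem_filter, Finset.mem_univ, true_and, not_not] at hl
          simp [hl]
      _ ≤ ∑ l ∈ Finset.univ.filter (fun l => v l ≠ 0), (1:ℝ) := by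
          apply Finset.sum_le_sum
          intro l _
          have h1 := (hv l).1
          have h2 := (hv l).2
          nlinarith
      _ = ((Finset.univ.filter (fun l => v l ≠ 0)).card : ℝ) := by simp
      _ ≤ (k : ℝ) := by exact_mod_cast hsparse
  have hnv2 : ∑ l, (-(v l)) ^ 2 ≤ (k : ℝ) := by simpa using hv2
  have h1 := one_sided d b k hb hk v hv2 j η hη
  have h2 := one_sided d b k hb hk (fun l => -(v l)) hnv2 j η hη
  have hNpos : (0:ℝ) < (Fintype.card ((Fin d → Fin b) × (Fin d → Bool)) : ℝ) := by
    have hne : Nonempty ((Fin d → Fin b) × (Fin d → Bool)) :=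
      ⟨(fun _ => ⟨0, hb⟩, fun _ => true)⟩
    have : 0 < Fintype.card ((Fin d → Fin b) × (Fin d → Bool)) :=
      Fintype.card_pos_iff.mpr hne
    exact_mod_cast this
  rw [div_le_iff₀ hNpos]
  -- event inclusion
  have hsub : (Finset.univ.filter (fun ω : (Fin d → Fin b) × (Fin d → Bool) =>
        η ≤ |∑ l : Fin d, (if ω.1 l = j then (1 : ℝ) else 0) *
              (if ω.2 l then (1 : ℝ) else -1) * v l|))
      ⊆ (Finset.univ.filter (fun ω : (Fin d → Fin b) × (Fin d → Bool) =>
        η ≤ ∑ l : Fin d, (if ω.1 l = j then (1 : ℝ) else 0) *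
              (if ω.2 l then (1 : ℝ) else -1) * v l))
      ∪ (Finset.univ.filter (fun ω : (Fin d → Fin b) × (Fin d → Bool) =>
        η ≤ ∑ l : Fin d, (if ω.1 l = j then (1 : ℝ) else 0) *
              (if ω.2 l then (1 : ℝ) else -1) * (-(v l)))) := by
    intro ω hω
    simp only [Finset.mem_filter, Finset.mem_univ, true_and, Finset.mem_union] at hω ⊢
    rcases le_abs.mp hω with h | h
    · exact Or.inl h
    · right
      calc η ≤ -∑ l : Fin d, (if ω.1 l = j then (1 : ℝ) else 0) *
              (if ω.2 l then (1 : ℝ) else -1) * v l := h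
        _ = _ := by rw [← Finset.sum_neg_distrib]; apply Finset.sum_congr rfl; intro l _; ring
  calc ((Finset.univ.filter (fun ω : (Fin d → Fin b) × (Fin d → Bool) =>
        η ≤ |∑ l : Fin d, (if ω.1 l = j then (1 : ℝ) else 0) *
              (if ω.2 l then (1 : ℝ) else -1) * v l|)).card : ℝ)
      ≤ ((Finset.univ.filter (fun ω : (Fin d → Fin b) × (Fin d → Bool) =>
        η ≤ ∑ l : Fin d, (if ω.1 l = j then (1 : ℝ) else 0) *
              (if ω.2 l then (1 : ℝ) else -1) * v l)).card : ℝ)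
        + ((Finset.univ.filter (fun ω : (Fin d → Fin b) × (Fin d → Bool) =>
        η ≤ ∑ l : Fin d, (if ω.1 l = j then (1 : ℝ) else 0) *
              (if ω.2 l then (1 : ℝ) else -1) * (-(v l)))).card : ℝ) := by
        have := Finset.card_le_card hsub
        have hu := Finset.card_union_le (Finset.univ.filter (fun ω : (Fin d → Fin b) × (Fin d → Bool) =>
        η ≤ ∑ l : Fin d, (if ω.1 l = j then (1 : ℝ) else 0) *
              (if ω.2 l then (1 : ℝ) else -1) * v l))
          (Finset.univ.filter (fun ω : (Fin d → Fin b) × (Fin d → Bool) =>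
        η ≤ ∑ l : Fin d, (if ω.1 l = j then (1 : ℝ) else 0) *
              (if ω.2 l then (1 : ℝ) else -1) * (-(v l))))
        exact_mod_cast le_trans this hu
    _ ≤ 2 * Real.exp (-η ^ 2 / (2 * k)) * (Fintype.card ((Fin d → Fin b) × (Fin d → Bool)) : ℝ) := by
        have := add_le_add h1 h2
        linarith
end

section
/- Let n, d, b, k be positive integers and β ∈ (0,1). For each i ∈ {1,…,n}, let v_i ∈ [−1,1]^d be k-sparse, and let (h_i, s_i) be independent random hash pairs (h_i(1),…,h_i(d) i.i.d. uniform on {1,…,b}, s_i(1),…,s_i(d) i.i.d. uniform on {−1,+1}, all mutually independent across i). Set B_{i,j} = ∑_{l : h_i(l)=j} s_i(l)·v_{i,l} and η = √(2k·log(4nb/β)). Then Pr[ ∃ i ∈ {1,…,n}, j ∈ {1,…,b} with |B_{i,j}| > η ] ≤ β/2. -/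
open Real Finset

lemma chernoff_one (d : ℕ) (a : Fin d → ℝ) (η t : ℝ) (ht : 0 ≤ t) :
    ∑ s : Fin d → Bool, (if η < ∑ l, (if s l then (1:ℝ) else -1) * a l then (1:ℝ) else 0)
      ≤ (2:ℝ)^d * Real.exp (-(t*η) + t^2/2 * ∑ l, (a l)^2) := by
  have step1 : ∑ s : Fin d → Bool,
      (if η < ∑ l, (if s l then (1:ℝ) else -1) * a l then (1:ℝ) else 0)
      ≤ ∑ s : Fin d → Bool, Real.exp (t * ((∑ l, (if s l then (1:ℝ) else -1) * a l) - η)) := by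
    apply Finset.sum_le_sum
    intro s _
    by_cases h : η < ∑ l, (if s l then (1:ℝ) else -1) * a l
    · simp only [h, if_true]
      exact Real.one_le_exp (mul_nonneg ht (by linarith))
    · simp only [h, if_false]
      exact (Real.exp_pos _).le
  have step2 : ∑ s : Fin d → Bool, Real.exp (t * ((∑ l, (if s l then (1:ℝ) else -1) * a l) - η))
      = Real.exp (-(t*η)) * ∏ l, (Real.exp (t * a l) + Real.exp (-(t * a l))) := by
    have : ∀ s : Fin d → Bool, Real.exp (t * ((∑ l, (if s l then (1:ℝ) else -1) * a l) - η))
        = Real.exp (-(t*η)) * ∏ l, Real.exp (t * ((if s l then (1:ℝ) else -1) * a l)) := by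
      intro s
      rw [← Real.exp_sum, ← Real.exp_add]
      congr 1
      rw [mul_sub, Finset.mul_sum]
      ring
    simp_rw [this, ← Finset.mul_sum]
    congr 1
    have := Finset.prod_univ_sum (fun _ : Fin d => (Finset.univ : Finset Bool))
      (fun l (c : Bool) => Real.exp (t * ((if c then (1:ℝ) else -1) * a l)))
    rw [Fintype.piFinset_univ] at this
    rw [← this]
    apply Finset.prod_congr rfl
    intro l _
    rw [Fintype.sum_bool]
    simp [mul_comm, mul_assoc, mul_neg, neg_mul]
  have step3 : ∏ l, (Real.exp (t * a l) + Real.exp (-(t * a l)))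
      ≤ (2:ℝ)^d * Real.exp (t^2/2 * ∑ l, (a l)^2) := by
    calc ∏ l, (Real.exp (t * a l) + Real.exp (-(t * a l)))
        ≤ ∏ l, (2 * Real.exp ((t * a l)^2 / 2)) := by
          apply Finset.prod_le_prod
          · intro l _; positivity
          · intro l _
            have h1 : Real.exp (t * a l) + Real.exp (-(t * a l)) = 2 * Real.cosh (t * a l) := by
              rw [Real.cosh_eq]; ring
            rw [h1]
            have := Real.cosh_le_exp_half_sq (t * a l)
            linarith
      _ = (2:ℝ)^d * Real.exp (t^2/2 * ∑ l, (a l)^2) := by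
          rw [Finset.prod_mul_distrib, Finset.prod_const, ← Real.exp_sum]
          simp [Finset.card_univ]
          rw [Finset.mul_sum]
          apply Finset.sum_congr rfl
          intro l _; ring
  calc ∑ s : Fin d → Bool, (if η < ∑ l, (if s l then (1:ℝ) else -1) * a l then (1:ℝ) else 0)
      ≤ Real.exp (-(t*η)) * ∏ l, (Real.exp (t * a l) + Real.exp (-(t * a l))) := by
        rw [← step2]; exact step1
    _ ≤ Real.exp (-(t*η)) * ((2:ℝ)^d * Real.exp (t^2/2 * ∑ l, (a l)^2)) := by
        apply mul_le_mul_of_nonneg_left step3 (Real.exp_pos _).le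
    _ = (2:ℝ)^d * Real.exp (-(t*η) + t^2/2 * ∑ l, (a l)^2) := by
        rw [Real.exp_add]; ring

lemma chernoff_two (d : ℕ) (a : Fin d → ℝ) (η t : ℝ) (ht : 0 ≤ t) :
    ∑ s : Fin d → Bool, (if η < |∑ l, (if s l then (1:ℝ) else -1) * a l| then (1:ℝ) else 0)
      ≤ 2 * (2:ℝ)^d * Real.exp (-(t*η) + t^2/2 * ∑ l, (a l)^2) := by
  have key : ∀ s : Fin d → Bool,
      (if η < |∑ l, (if s l then (1:ℝ) else -1) * a l| then (1:ℝ) else 0)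
      ≤ (if η < ∑ l, (if s l then (1:ℝ) else -1) * a l then (1:ℝ) else 0)
        + (if η < ∑ l, (if s l then (1:ℝ) else -1) * (-a) l then (1:ℝ) else 0) := by
    intro s
    have nn : ∀ (p : Prop) [Decidable p], (0:ℝ) ≤ if p then 1 else 0 := by
      intro p _; split <;> norm_num
    by_cases h : η < |∑ l, (if s l then (1:ℝ) else -1) * a l|
    · simp only [h, if_true]
      rcases lt_abs.mp h with h1 | h1
      · simp only [h1, if_true]
        have := nn (η < ∑ l, (if s l then (1:ℝ) else -1) * (-a) l)
        linarith
      · have e : ∑ l, (if s l then (1:ℝ) else -1) * (-a) l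
            = -∑ l, (if s l then (1:ℝ) else -1) * a l := by
          rw [← Finset.sum_neg_distrib]
          exact Finset.sum_congr rfl (fun l _ => by simp [mul_neg])
        have h2 : η < ∑ l, (if s l then (1:ℝ) else -1) * (-a) l := by rw [e]; exact h1
        simp only [h2, if_true]
        have := nn (η < ∑ l, (if s l then (1:ℝ) else -1) * a l)
        linarith
    · simp only [h, if_false]
      have := nn (η < ∑ l, (if s l then (1:ℝ) else -1) * a l)
      have := nn (η < ∑ l, (if s l then (1:ℝ) else -1) * (-a) l)
      linarith
  calc ∑ s : Fin d → Bool, (if η < |∑ l, (if s l then (1:ℝ) else -1) * a l| then (1:ℝ) else 0)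
      ≤ ∑ s : Fin d → Bool, ((if η < ∑ l, (if s l then (1:ℝ) else -1) * a l then (1:ℝ) else 0)
        + (if η < ∑ l, (if s l then (1:ℝ) else -1) * (-a) l then (1:ℝ) else 0)) :=
        Finset.sum_le_sum (fun s _ => key s)
    _ = (∑ s : Fin d → Bool, (if η < ∑ l, (if s l then (1:ℝ) else -1) * a l then (1:ℝ) else 0))
        + ∑ s : Fin d → Bool, (if η < ∑ l, (if s l then (1:ℝ) else -1) * (-a) l then (1:ℝ) else 0) :=
        Finset.sum_add_distrib
    _ ≤ (2:ℝ)^d * Real.exp (-(t*η) + t^2/2 * ∑ l, (a l)^2)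
        + (2:ℝ)^d * Real.exp (-(t*η) + t^2/2 * ∑ l, ((-a) l)^2) := by
        exact add_le_add (chernoff_one d a η t ht) (chernoff_one d (-a) η t ht)
    _ = 2 * (2:ℝ)^d * Real.exp (-(t*η) + t^2/2 * ∑ l, (a l)^2) := by
        simp only [Pi.neg_apply, neg_sq]; ring

lemma per_point (d b k : ℕ) (hk : 0 < k) (w : Fin d → ℝ)
    (hsp : (Finset.univ.filter (fun l => w l ≠ 0)).card ≤ k)
    (hw : ∀ l, w l ∈ Set.Icc (-1:ℝ) 1) (C : ℝ) (hC : 1 < C)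
    (h : Fin d → Fin b) (j : Fin b) :
    ∑ s : Fin d → Bool, (if Real.sqrt (2 * k * Real.log C) <
        |∑ l, (if h l = j then (1:ℝ) else 0) * (if s l then (1:ℝ) else -1) * w l|
        then (1:ℝ) else 0)
      ≤ 2 * (2:ℝ)^d / C := by
  set a : Fin d → ℝ := fun l => (if h l = j then (1:ℝ) else 0) * w l with ha
  have hrw : ∀ s : Fin d → Bool,
      ∑ l, (if h l = j then (1:ℝ) else 0) * (if s l then (1:ℝ) else -1) * w l
      = ∑ l, (if s l then (1:ℝ) else -1) * a l := by
    intro s; apply Finset.sum_congr rfl; intro l _; simp only [ha]; ring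
  have hK : ∑ l, (a l)^2 ≤ (k:ℝ) := by
    calc ∑ l, (a l)^2 ≤ ∑ l, (if w l ≠ 0 then (1:ℝ) else 0) := by
          apply Finset.sum_le_sum
          intro l _
          by_cases hw0 : w l = 0
          · simp [ha, hw0]
          · simp only [hw0, ne_eq, not_false_eq_true, if_true]
            have h1 := (hw l).1; have h2 := (hw l).2
            by_cases hh : h l = j
            · simp only [ha, hh, if_true, one_mul]; nlinarith
            · simp [ha, hh]
      _ = ((Finset.univ.filter (fun l => w l ≠ 0)).card : ℝ) := by
          rw [Finset.sum_boole]
      _ ≤ (k:ℝ) := by exact_mod_cast hsp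
  have hL : 0 < Real.log C := Real.log_pos hC
  have hkr : (0:ℝ) < k := by exact_mod_cast hk
  set η := Real.sqrt (2 * k * Real.log C) with hη
  have hη2 : η^2 = 2 * k * Real.log C := Real.sq_sqrt (by positivity)
  have hηnn : 0 ≤ η := Real.sqrt_nonneg _
  set t := η / k with htdef
  have ht : 0 ≤ t := by positivity
  have e1 : t * η = η^2 / k := by rw [htdef]; field_simp
  have e2 : t^2/2 * (k:ℝ) = η^2 / (2*k) := by rw [htdef]; field_simp
  have e3 : η^2 / k = 2 * Real.log C := by rw [hη2]; field_simp
  have e4 : η^2 / (2*k) = Real.log C := by rw [hη2]; field_simp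
  have hexp : -(t*η) + t^2/2 * ∑ l, (a l)^2 ≤ -Real.log C := by
    have h1 : t^2/2 * (∑ l, (a l)^2) ≤ t^2/2 * (k:ℝ) :=
      mul_le_mul_of_nonneg_left hK (by positivity)
    linarith [e1, e2, e3, e4, h1]
  calc ∑ s : Fin d → Bool, (if η <
        |∑ l, (if h l = j then (1:ℝ) else 0) * (if s l then (1:ℝ) else -1) * w l|
        then (1:ℝ) else 0)
      = ∑ s : Fin d → Bool, (if η < |∑ l, (if s l then (1:ℝ) else -1) * a l|
        then (1:ℝ) else 0) := by
        apply Finset.sum_congr rfl; intro s _; rw [hrw s]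
    _ ≤ 2 * (2:ℝ)^d * Real.exp (-(t*η) + t^2/2 * ∑ l, (a l)^2) := chernoff_two d a η t ht
    _ ≤ 2 * (2:ℝ)^d * Real.exp (-Real.log C) := by
        apply mul_le_mul_of_nonneg_left (Real.exp_le_exp.mpr hexp) (by positivity)
    _ = 2 * (2:ℝ)^d / C := by
        rw [Real.exp_neg, Real.exp_log (by linarith)]
        ring

lemma per_ij (d b k : ℕ) (hk : 0 < k) (w : Fin d → ℝ)
    (hsp : (Finset.univ.filter (fun l => w l ≠ 0)).card ≤ k)
    (hw : ∀ l, w l ∈ Set.Icc (-1:ℝ) 1) (C : ℝ) (hC : 1 < C) (j : Fin b) :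
    ∑ x : (Fin d → Fin b) × (Fin d → Bool), (if Real.sqrt (2 * k * Real.log C) <
        |∑ l, (if x.1 l = j then (1:ℝ) else 0) * (if x.2 l then (1:ℝ) else -1) * w l|
        then (1:ℝ) else 0)
      ≤ 2 * (Fintype.card ((Fin d → Fin b) × (Fin d → Bool)) : ℝ) / C := by
  rw [Fintype.sum_prod_type]
  have hcard : (Fintype.card ((Fin d → Fin b) × (Fin d → Bool)) : ℝ)
      = (b:ℝ)^d * (2:ℝ)^d := by
    simp [Fintype.card_prod, Fintype.card_fun]
  calc ∑ h : Fin d → Fin b, ∑ s : Fin d → Bool, (if Real.sqrt (2 * k * Real.log C) <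
        |∑ l, (if h l = j then (1:ℝ) else 0) * (if s l then (1:ℝ) else -1) * w l|
        then (1:ℝ) else 0)
      ≤ ∑ _h : Fin d → Fin b, 2 * (2:ℝ)^d / C :=
        Finset.sum_le_sum (fun h _ => per_point d b k hk w hsp hw C hC h j)
    _ = (b:ℝ)^d * (2 * (2:ℝ)^d / C) := by
        rw [Finset.sum_const, Finset.card_univ]
        simp [Fintype.card_fun]
    _ = 2 * (Fintype.card ((Fin d → Fin b) × (Fin d → Bool)) : ℝ) / C := by
        rw [hcard]; ring

lemma sum_coord {α : Type*} [Fintype α] [DecidableEq α] {n : ℕ} (i : Fin n) (f : α → ℝ) :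
    ∑ ω : Fin n → α, f (ω i) = (Fintype.card α : ℝ)^(n-1) * ∑ x : α, f x := by
  rw [show (∑ ω : Fin n → α, f (ω i))
      = ∑ p : α × ({j : Fin n // j ≠ i} → α), f p.1 from
    Fintype.sum_equiv (Equiv.funSplitAt i α) _ _ (fun ω => rfl)]
  rw [Fintype.sum_prod_type]
  simp only [Finset.sum_const, Finset.card_univ, nsmul_eq_mul]
  rw [← Finset.mul_sum]
  have hcard : (Fintype.card ({j : Fin n // j ≠ i} → α) : ℝ) = (Fintype.card α : ℝ)^(n-1) := by
    rw [Fintype.card_fun]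
    have : Fintype.card {j : Fin n // j ≠ i} = n - 1 := by
      rw [Fintype.card_subtype_compl, Fintype.card_subtype_eq, Fintype.card_fin]
    rw [this]
    push_cast
    ring
  rw [hcard]

lemma ind_exists_le {n b : ℕ} (Q : Fin n → Fin b → Prop)
    [Decidable (∃ i, ∃ j, Q i j)] [∀ i j, Decidable (Q i j)] :
    (if ∃ i, ∃ j, Q i j then (1:ℝ) else 0) ≤ ∑ i, ∑ j, if Q i j then (1:ℝ) else 0 := by
  split
  · next h =>
    obtain ⟨i, j, hij⟩ := h
    calc (1:ℝ) = (if Q i j then (1:ℝ) else 0) := by rw [if_pos hij]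
      _ ≤ ∑ j', (if Q i j' then (1:ℝ) else 0) :=
          Finset.single_le_sum (f := fun j' => if Q i j' then (1:ℝ) else 0)
            (fun j' _ => by split <;> norm_num) (Finset.mem_univ j)
      _ ≤ ∑ i', ∑ j', (if Q i' j' then (1:ℝ) else 0) :=
          Finset.single_le_sum (f := fun i' => ∑ j', if Q i' j' then (1:ℝ) else 0)
            (fun i' _ => Finset.sum_nonneg fun j' _ => by split <;> norm_num)
            (Finset.mem_univ i)
  · exact Finset.sum_nonneg fun i' _ => Finset.sum_nonneg fun j' _ => by split <;> norm_num


/-- Let `n, d, b, k` be positive integers and `β ∈ (0,1)`. For each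
client `i`, let `v_i ∈ [−1,1]^d` be `k`-sparse, and let the hash pairs `(h_i, s_i)`
be uniformly random and mutually independent across clients (i.e. the whole family is
uniform on the finite product space). With `B_{i,j} = ∑_{l : h_i(l)=j} s_i(l)·v_{i,l}`
and `η = √(2k·log(4nb/β))`, we have
`Pr[∃ i j, |B_{i,j}| > η] ≤ β/2`. -/
theorem all_bins_clipped_whp (n d b k : ℕ) (hn : 0 < n) (hd : 0 < d) (hb : 0 < b)
    (hk : 0 < k) (β : ℝ) (hβ0 : 0 < β) (hβ1 : β < 1)
    (v : Fin n → Fin d → ℝ)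
    (hsparse : ∀ i, (Finset.univ.filter (fun l => v i l ≠ 0)).card ≤ k)
    (hv : ∀ i l, v i l ∈ Set.Icc (-1 : ℝ) 1) :
    ((Finset.univ.filter (fun ω : Fin n → (Fin d → Fin b) × (Fin d → Bool) =>
        ∃ i : Fin n, ∃ j : Fin b,
          Real.sqrt (2 * k * Real.log (4 * n * b / β)) <
            |∑ l : Fin d, (if (ω i).1 l = j then (1 : ℝ) else 0) *
              (if (ω i).2 l then (1 : ℝ) else -1) * v i l|)).card : ℝ)
      / (Fintype.card (Fin n → (Fin d → Fin b) × (Fin d → Bool)) : ℝ)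
      ≤ β / 2 := by
  set C : ℝ := 4 * n * b / β with hCdef
  have hn1 : (1:ℝ) ≤ n := by exact_mod_cast hn
  have hb1 : (1:ℝ) ≤ b := by exact_mod_cast hb
  have hC : 1 < C := by
    rw [hCdef, lt_div_iff₀ hβ0]
    nlinarith
  haveI : Nonempty (Fin b) := ⟨⟨0, hb⟩⟩
  set M : ℝ := (Fintype.card ((Fin d → Fin b) × (Fin d → Bool)) : ℝ) with hMdef
  have hMpos : 0 < M := by
    rw [hMdef]; exact_mod_cast Fintype.card_pos
  have hNcard : (Fintype.card (Fin n → (Fin d → Fin b) × (Fin d → Bool)) : ℝ) = M^n := by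
    rw [hMdef, Fintype.card_fun, Fintype.card_fin]
    push_cast
    ring
  have hNpos : 0 < (Fintype.card (Fin n → (Fin d → Fin b) × (Fin d → Bool)) : ℝ) := by
    exact_mod_cast Fintype.card_pos
  rw [div_le_iff₀ hNpos]
  have hM : M^(n-1) * M = M^n := by
    rw [← pow_succ, Nat.sub_add_cancel hn]
  calc ((Finset.univ.filter (fun ω : Fin n → (Fin d → Fin b) × (Fin d → Bool) =>
        ∃ i : Fin n, ∃ j : Fin b,
          Real.sqrt (2 * k * Real.log C) <
            |∑ l : Fin d, (if (ω i).1 l = j then (1 : ℝ) else 0) *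
              (if (ω i).2 l then (1 : ℝ) else -1) * v i l|)).card : ℝ)
      = ∑ ω : Fin n → (Fin d → Fin b) × (Fin d → Bool),
          (if ∃ i : Fin n, ∃ j : Fin b, Real.sqrt (2 * k * Real.log C) <
            |∑ l : Fin d, (if (ω i).1 l = j then (1 : ℝ) else 0) *
              (if (ω i).2 l then (1 : ℝ) else -1) * v i l| then (1:ℝ) else 0) :=
        (Finset.sum_boole _ _).symm
    _ ≤ ∑ ω : Fin n → (Fin d → Fin b) × (Fin d → Bool), ∑ i : Fin n, ∑ j : Fin b,
          (if Real.sqrt (2 * k * Real.log C) <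
            |∑ l : Fin d, (if (ω i).1 l = j then (1 : ℝ) else 0) *
              (if (ω i).2 l then (1 : ℝ) else -1) * v i l| then (1:ℝ) else 0) :=
        Finset.sum_le_sum fun ω _ => ind_exists_le _
    _ = ∑ i : Fin n, ∑ ω : Fin n → (Fin d → Fin b) × (Fin d → Bool), ∑ j : Fin b,
          (if Real.sqrt (2 * k * Real.log C) <
            |∑ l : Fin d, (if (ω i).1 l = j then (1 : ℝ) else 0) *
              (if (ω i).2 l then (1 : ℝ) else -1) * v i l| then (1:ℝ) else 0) :=
        Finset.sum_comm
    _ = ∑ i : Fin n, ∑ j : Fin b, ∑ ω : Fin n → (Fin d → Fin b) × (Fin d → Bool),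
          (if Real.sqrt (2 * k * Real.log C) <
            |∑ l : Fin d, (if (ω i).1 l = j then (1 : ℝ) else 0) *
              (if (ω i).2 l then (1 : ℝ) else -1) * v i l| then (1:ℝ) else 0) :=
        Finset.sum_congr rfl fun i _ => Finset.sum_comm
    _ = ∑ i : Fin n, ∑ j : Fin b, M^(n-1) *
          ∑ x : (Fin d → Fin b) × (Fin d → Bool),
          (if Real.sqrt (2 * k * Real.log C) <
            |∑ l : Fin d, (if x.1 l = j then (1 : ℝ) else 0) *
              (if x.2 l then (1 : ℝ) else -1) * v i l| then (1:ℝ) else 0) :=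
        Finset.sum_congr rfl fun i _ => Finset.sum_congr rfl fun j _ =>
          sum_coord i (fun x : (Fin d → Fin b) × (Fin d → Bool) =>
            if Real.sqrt (2 * k * Real.log C) <
            |∑ l : Fin d, (if x.1 l = j then (1 : ℝ) else 0) *
              (if x.2 l then (1 : ℝ) else -1) * v i l| then (1:ℝ) else 0)
    _ ≤ ∑ _i : Fin n, ∑ _j : Fin b, M^(n-1) * (2 * M / C) := by
        apply Finset.sum_le_sum
        intro i _
        apply Finset.sum_le_sum
        intro j _
        exact mul_le_mul_of_nonneg_left
          (per_ij d b k hk (v i) (hsparse i) (hv i) C hC j) (by positivity)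
    _ = (n:ℝ) * b * (M^(n-1) * (2 * M / C)) := by
        rw [Finset.sum_const, Finset.sum_const, Finset.card_univ, Finset.card_univ]
        simp [Fintype.card_fin]
        ring
    _ = β / 2 * M^n := by
        rw [← hM, hCdef]
        have hn0 : (n:ℝ) ≠ 0 := by positivity
        have hb0 : (b:ℝ) ≠ 0 := by positivity
        have hβ0' : β ≠ 0 := ne_of_gt hβ0
        field_simp
        ring
    _ = β / 2 * (Fintype.card (Fin n → (Fin d → Fin b) × (Fin d → Bool)) : ℝ) := by
        rw [hNcard]
end

section
/- Let n, d, b, k be positive integers, fix a coordinate x ∈ {1,…,d}, and for each i ∈ {1,…,n} let v_i ∈ [−1,1]^d be k-sparse and let (h_i, s_i) be independent random hash pairs (h_i(1),…,h_i(d) i.i.d. uniform on {1,…,b}, s_i(1),…,s_i(d) i.i.d. uniform on {−1,+1}, all mutually independent across i). Define the binning error W = (1/n)·∑_{i=1}^{n} ∑_{l ≠ x} 1[h_i(l) = h_i(x)]·v_{i,l}·s_i(l)·s_i(x). Then E[W] = 0, and for every t > 0, Pr[ |W| ≥ t ] ≤ 2·exp( −n·t² / (2·(k/b + t/3)) ).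 -/
open Real Finset

set_option maxHeartbeats 1000000

lemma aux_one_sub_mul_exp (y : ℝ) : (1 - y) * Real.exp y ≤ 1 := by
  have h1 : (-y) + 1 ≤ Real.exp (-y) := Real.add_one_le_exp (-y)
  have h2 : Real.exp (-y) * Real.exp y = 1 := by
    rw [← Real.exp_add]; simp
  nlinarith [Real.exp_pos y]

lemma aux_g_bound {l : ℝ} (hl : 0 ≤ l) (hl3 : l < 3) :
    Real.exp l - l - 1 ≤ l ^ 2 / (2 * (1 - l / 3)) := by
  set φ : ℝ → ℝ := fun y => y ^ 2 / 2 - (1 - y / 3) * (Real.exp y - y - 1) with hφ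
  set φ₁ : ℝ → ℝ := fun y =>
      y - ((-(1/3)) * (Real.exp y - y - 1) + (1 - y / 3) * (Real.exp y - 1)) with hφ₁
  have hd : ∀ y, HasDerivAt φ (φ₁ y) y := by
    intro y
    have h1 : HasDerivAt (fun y : ℝ => y ^ 2 / 2) y y := by
      simpa using (hasDerivAt_pow 2 y).div_const 2
    have h2 : HasDerivAt (fun y : ℝ => 1 - y / 3) (-(1/3)) y := by
      simpa using ((hasDerivAt_id y).div_const 3).const_sub 1
    have h3 : HasDerivAt (fun y : ℝ => Real.exp y - y - 1) (Real.exp y - 1) y := by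
      simpa using ((Real.hasDerivAt_exp y).sub (hasDerivAt_id y)).sub_const 1
    exact h1.sub (h2.mul h3)
  have hd1 : ∀ y, HasDerivAt φ₁ ((1 + (y - 1) * Real.exp y) / 3) y := by
    intro y
    have h2 : HasDerivAt (fun y : ℝ => 1 - y / 3) (-(1/3)) y := by
      simpa using ((hasDerivAt_id y).div_const 3).const_sub 1
    have h3 : HasDerivAt (fun y : ℝ => Real.exp y - y - 1) (Real.exp y - 1) y := by
      simpa using ((Real.hasDerivAt_exp y).sub (hasDerivAt_id y)).sub_const 1
    have h4 : HasDerivAt (fun y : ℝ => Real.exp y - 1) (Real.exp y) y := by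
      simpa using (Real.hasDerivAt_exp y).sub_const 1
    have := (hasDerivAt_id y).sub
      (((h3.const_mul (-(1/3 : ℝ)))).add (h2.mul h4))
    exact this.congr_deriv (by ring)
  have hmono : Monotone φ₁ := by
    apply monotone_of_deriv_nonneg
    · exact fun y => (hd1 y).differentiableAt
    · intro y
      rw [(hd1 y).deriv]
      have := aux_one_sub_mul_exp y
      nlinarith
  have hφ₁0 : φ₁ 0 = 0 := by simp [φ₁]
  have hφ₁nonneg : ∀ y, 0 ≤ y → 0 ≤ φ₁ y := by
    intro y hy
    rw [← hφ₁0]; exact hmono hy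
  have hφmono : MonotoneOn φ (Set.Ici 0) := by
    apply monotoneOn_of_deriv_nonneg (convex_Ici 0)
    · exact Continuous.continuousOn (by continuity)
    · intro y _
      exact (hd y).differentiableAt.differentiableWithinAt
    · intro y hy
      rw [(hd y).deriv]
      exact hφ₁nonneg y (le_of_lt (by simpa using hy))
  have hφ0 : φ 0 = 0 := by simp [φ]
  have hφl : 0 ≤ φ l := by
    rw [← hφ0]
    exact hφmono (by simp) (by simpa using hl) hl
  have hpos : 0 < 1 - l / 3 := by linarith
  rw [le_div_iff₀ (by linarith : (0:ℝ) < 2 * (1 - l / 3))]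
  simp only [φ] at hφl
  nlinarith

lemma aux_convex_exp {m l : ℝ} (hm : 0 ≤ m) (hm1 : m ≤ 1) :
    Real.exp (l * m) ≤ (1 - m) + m * Real.exp l := by
  have h := convexOn_exp.2 (Set.mem_univ (0:ℝ)) (Set.mem_univ l)
    (by linarith : (0:ℝ) ≤ 1 - m) hm (by ring)
  simpa [smul_eq_mul, mul_comm] using h

lemma coord_bound (b : ℕ) (hb : 0 < b) {a l : ℝ} (ha : |a| ≤ 1) (hl : 0 ≤ l) :
    2 * ((b:ℝ) - 1) + Real.exp (l * a) + Real.exp (-(l * a)) ≤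
      2 * b * Real.exp (|a| * (Real.exp l - l - 1) / b) := by
  set m := |a| with hm
  have hm0 : 0 ≤ m := abs_nonneg a
  have hm1 : m ≤ 1 := ha
  have hpair : Real.exp (l * a) + Real.exp (-(l * a))
      = Real.exp (l * m) + Real.exp (-(l * m)) := by
    rcases abs_cases a with ⟨h1, _⟩ | ⟨h1, _⟩
    · rw [hm, h1]
    · rw [hm, h1]; ring_nf
  have hc1 : Real.exp (l * m) ≤ (1 - m) + m * Real.exp l := aux_convex_exp hm0 hm1
  have hc2 : Real.exp (-(l * m)) ≤ (1 - m) + m * Real.exp (-l) := by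
    have := aux_convex_exp (l := -l) hm0 hm1
    simpa [neg_mul, mul_comm] using this
  have hsinh : 2 * l ≤ Real.exp l - Real.exp (-l) := by
    have h := Real.self_le_sinh_iff.mpr hl
    rw [Real.sinh_eq] at h
    linarith
  have hg : 0 ≤ Real.exp l - l - 1 := by
    have := Real.add_one_le_exp l; linarith
  have hb1 : (1:ℝ) ≤ b := by exact_mod_cast hb
  have hbpos : (0:ℝ) < b := by linarith
  have hexp : 1 + m * (Real.exp l - l - 1) / b ≤ Real.exp (m * (Real.exp l - l - 1) / b) := by
    have := Real.add_one_le_exp (m * (Real.exp l - l - 1) / b)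
    linarith
  rw [add_assoc, hpair, ← add_assoc]
  have key : 2 * ((b:ℝ) - 1) + Real.exp (l * m) + Real.exp (-(l * m))
      ≤ 2 * b * (1 + m * (Real.exp l - l - 1) / b) := by
    have hfield : 2 * (b:ℝ) * (1 + m * (Real.exp l - l - 1) / b)
        = 2 * b + 2 * m * (Real.exp l - l - 1) := by
      field_simp
    rw [hfield]
    nlinarith
  calc 2 * ((b:ℝ) - 1) + Real.exp (l * m) + Real.exp (-(l * m))
      ≤ 2 * b * (1 + m * (Real.exp l - l - 1) / b) := key
    _ ≤ 2 * b * Real.exp (m * (Real.exp l - l - 1) / b) := by nlinarith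

lemma split_helper {d : ℕ} (x : Fin d) (C : Type*) [Fintype C] [DecidableEq C]
    (φ : Fin d → C → C → ℝ) :
    ∑ g : Fin d → C, ∏ j ∈ Finset.univ.erase x, φ j (g j) (g x)
      = ∑ c : C, ∏ j ∈ Finset.univ.erase x, ∑ u : C, φ j u c := by
  classical
  rw [← Equiv.sum_comp (Equiv.funSplitAt x C).symm
    (fun g => ∏ j ∈ Finset.univ.erase x, φ j (g j) (g x))]
  rw [Fintype.sum_prod_type]
  apply Fintype.sum_congr
  intro c
  have hmem : ∀ j : Fin d, j ∈ Finset.univ.erase x ↔ j ≠ x := by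
    intro j; simp [Finset.mem_erase]
  have lhs_eq : ∀ r : {j // j ≠ x} → C,
      ∏ j ∈ Finset.univ.erase x,
        φ j ((Equiv.funSplitAt x C).symm (c, r) j) ((Equiv.funSplitAt x C).symm (c, r) x)
      = ∏ j : {j // j ≠ x}, φ j.1 (r j) c := by
    intro r
    rw [Finset.prod_subtype (Finset.univ.erase x) hmem
      (fun j => φ j ((Equiv.funSplitAt x C).symm (c, r) j) ((Equiv.funSplitAt x C).symm (c, r) x))]
    apply Finset.prod_congr rfl
    intro j _
    have h1 : (Equiv.funSplitAt x C).symm (c, r) j.1 = r j := by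
      simp [Equiv.funSplitAt_symm_apply, j.2]
    have h2 : (Equiv.funSplitAt x C).symm (c, r) x = c := by
      simp [Equiv.funSplitAt_symm_apply]
    rw [h1, h2]
  simp only [lhs_eq]
  rw [← Fintype.piFinset_univ,
    Finset.sum_prod_piFinset Finset.univ (fun (j : {j // j ≠ x}) u => φ j.1 u c)]
  rw [Finset.prod_subtype (Finset.univ.erase x) hmem (fun j => ∑ u : C, φ j u c)]

lemma reindex_helper {A B γ : Type*} [Fintype A] [Fintype B] [Fintype γ] [DecidableEq γ]
    (F : (γ → A) × (γ → B) → ℝ) :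
    ∑ σ : (γ → A) × (γ → B), F σ
      = ∑ g : γ → A × B, F (fun j => (g j).1, fun j => (g j).2) := by
  rw [← Equiv.sum_comp (Equiv.arrowProdEquivProdArrow γ (fun _ => A) (fun _ => B)) F]
  rfl

lemma mgf_single (d b : ℕ) (hd : 0 < d) (hb : 0 < b) (x : Fin d) (w : Fin d → ℝ)
    (hw1 : ∀ j, |w j| ≤ 1) (K : ℝ) (hK : ∑ j ∈ Finset.univ.erase x, |w j| ≤ K)
    (l : ℝ) (hl : 0 ≤ l) :
    ∑ σ : (Fin d → Fin b) × (Fin d → Bool),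
        Real.exp (l * ∑ j ∈ Finset.univ.erase x,
          (if σ.1 j = σ.1 x then (1 : ℝ) else 0) * w j *
            (if σ.2 j then (1 : ℝ) else -1) * (if σ.2 x then (1 : ℝ) else -1))
      ≤ (Fintype.card ((Fin d → Fin b) × (Fin d → Bool)) : ℝ) *
          Real.exp (K * (Real.exp l - l - 1) / b) := by
  classical
  set g₀ : ℝ := Real.exp l - l - 1 with hg₀
  have hg0 : 0 ≤ g₀ := by
    have := Real.add_one_le_exp l; simp only [hg₀]; linarith
  have hbR : (0:ℝ) < b := by exact_mod_cast hb
  set φ : Fin d → (Fin b × Bool) → (Fin b × Bool) → ℝ := fun j u c =>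
    Real.exp (l * ((if u.1 = c.1 then (1 : ℝ) else 0) * w j *
      (if u.2 then (1 : ℝ) else -1) * (if c.2 then (1 : ℝ) else -1))) with hφ
  have main_eq : ∑ σ : (Fin d → Fin b) × (Fin d → Bool),
      Real.exp (l * ∑ j ∈ Finset.univ.erase x,
        (if σ.1 j = σ.1 x then (1 : ℝ) else 0) * w j *
          (if σ.2 j then (1 : ℝ) else -1) * (if σ.2 x then (1 : ℝ) else -1))
      = ∑ c : Fin b × Bool, ∏ j ∈ Finset.univ.erase x, ∑ u : Fin b × Bool, φ j u c := by
    rw [reindex_helper (fun σ : (Fin d → Fin b) × (Fin d → Bool) =>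
      Real.exp (l * ∑ j ∈ Finset.univ.erase x,
        (if σ.1 j = σ.1 x then (1 : ℝ) else 0) * w j *
          (if σ.2 j then (1 : ℝ) else -1) * (if σ.2 x then (1 : ℝ) else -1)))]
    rw [← split_helper x (Fin b × Bool) φ]
    apply Fintype.sum_congr
    intro g
    rw [Finset.mul_sum, Real.exp_sum]
  rw [main_eq]
  have coordsum : ∀ (c : Fin b × Bool) (j : Fin d),
      ∑ u : Fin b × Bool, φ j u c
        = 2 * ((b:ℝ) - 1) + Real.exp (l * w j) + Real.exp (-(l * w j)) := by
    intro c j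
    rw [Fintype.sum_prod_type]
    have hbool : ∀ u1 : Fin b,
        (∑ u2 : Bool, φ j (u1, u2) c)
          = 2 + (if u1 = c.1 then Real.exp (l * w j) + Real.exp (-(l * w j)) - 2 else 0) := by
      intro u1
      rcases Bool.dichotomy c.2 with hc | hc <;>
        by_cases h : u1 = c.1 <;>
          simp [hφ, h, hc, Fintype.sum_bool] <;> ring_nf
    simp only [hbool]
    rw [Finset.sum_add_distrib, Finset.sum_const, Finset.sum_ite_eq' Finset.univ c.1]
    simp [Finset.card_univ]
    ring
  have hKK : 0 ≤ K := le_trans (Finset.sum_nonneg fun j _ => abs_nonneg _) hK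
  have prodbound : ∀ c : Fin b × Bool,
      ∏ j ∈ Finset.univ.erase x, ∑ u : Fin b × Bool, φ j u c
        ≤ (2*(b:ℝ))^(d-1) * Real.exp (K * g₀ / b) := by
    intro c
    have h1 : ∏ j ∈ Finset.univ.erase x, ∑ u : Fin b × Bool, φ j u c
        ≤ ∏ j ∈ Finset.univ.erase x, (2*(b:ℝ) * Real.exp (|w j| * g₀ / b)) := by
      apply Finset.prod_le_prod
      · intro j _
        rw [coordsum c j]
        have := Real.exp_pos (l * w j)
        have := Real.exp_pos (-(l * w j))
        have hb1 : (1:ℝ) ≤ b := by exact_mod_cast hb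
        linarith
      · intro j _
        rw [coordsum c j, hg₀]
        exact coord_bound b hb (hw1 j) hl
    refine le_trans h1 ?_
    rw [Finset.prod_mul_distrib, Finset.prod_const, ← Real.exp_sum]
    have hcard : (Finset.univ.erase x).card = d - 1 := by
      simp [Finset.card_erase_of_mem]
    rw [hcard]
    apply mul_le_mul_of_nonneg_left _ (by positivity)
    rw [Real.exp_le_exp]
    have heq : ∑ j ∈ Finset.univ.erase x, |w j| * g₀ / b
        = (∑ j ∈ Finset.univ.erase x, |w j|) * (g₀ / b) := by
      rw [Finset.sum_mul]
      apply Finset.sum_congr rfl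
      intro j _
      ring
    rw [heq]
    have : K * g₀ / b = K * (g₀ / b) := by ring
    rw [this]
    exact mul_le_mul_of_nonneg_right hK (by positivity)
  calc ∑ c : Fin b × Bool, ∏ j ∈ Finset.univ.erase x, ∑ u : Fin b × Bool, φ j u c
      ≤ ∑ _c : Fin b × Bool, (2*(b:ℝ))^(d-1) * Real.exp (K * g₀ / b) :=
        Finset.sum_le_sum fun c _ => prodbound c
    _ = (Fintype.card ((Fin d → Fin b) × (Fin d → Bool)) : ℝ) * Real.exp (K * g₀ / b) := by
        rw [Finset.sum_const, Finset.card_univ]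
        have h2b : ((Fintype.card (Fin b × Bool)) : ℝ) = 2 * b := by
          simp [Fintype.card_prod]; ring
        have hcard2 : (Fintype.card ((Fin d → Fin b) × (Fin d → Bool)) : ℝ)
            = (2*(b:ℝ))^d := by
          simp [Fintype.card_prod, Fintype.card_fun]
          rw [mul_pow]
          ring
        rw [nsmul_eq_mul, h2b, hcard2]
        have hd1 : d - 1 + 1 = d := Nat.succ_pred_eq_of_pos hd
        rw [show ((2*(b:ℝ))^d) = (2*(b:ℝ))^(d-1) * (2*(b:ℝ)) from by rw [← pow_succ, hd1]]
        ring

lemma onesided (n d b : ℕ) (hn : 0 < n) (hd : 0 < d) (hb : 0 < b) (x : Fin d)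
    (w : Fin n → Fin d → ℝ) (hw1 : ∀ i j, |w i j| ≤ 1)
    (K : ℝ) (hK : ∀ i, ∑ j ∈ Finset.univ.erase x, |w i j| ≤ K)
    (t l : ℝ) (hl : 0 ≤ l) :
    ((Finset.univ.filter (fun ω : Fin n → (Fin d → Fin b) × (Fin d → Bool) =>
        (n:ℝ) * t ≤ ∑ i : Fin n, ∑ j ∈ Finset.univ.erase x,
          (if (ω i).1 j = (ω i).1 x then (1 : ℝ) else 0) * w i j *
            (if (ω i).2 j then (1 : ℝ) else -1) *
              (if (ω i).2 x then (1 : ℝ) else -1))).card : ℝ)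
      ≤ (Fintype.card (Fin n → (Fin d → Fin b) × (Fin d → Bool)) : ℝ) *
          Real.exp (-(l * ((n:ℝ) * t)) + n * (K * (Real.exp l - l - 1) / b)) := by
  classical
  set Ω₀ := (Fin d → Fin b) × (Fin d → Bool)
  set S : Fin n → Ω₀ → ℝ := fun i σ => ∑ j ∈ Finset.univ.erase x,
    (if σ.1 j = σ.1 x then (1 : ℝ) else 0) * w i j *
      (if σ.2 j then (1 : ℝ) else -1) * (if σ.2 x then (1 : ℝ) else -1) with hS
  set P := Finset.univ.filter (fun ω : Fin n → Ω₀ => (n:ℝ) * t ≤ ∑ i : Fin n, S i (ω i)) with hP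
  have step1 : (P.card : ℝ) ≤ ∑ ω : Fin n → Ω₀,
      Real.exp (l * (∑ i : Fin n, S i (ω i) - (n:ℝ) * t)) := by
    rw [Finset.card_eq_sum_ones P]
    push_cast
    calc (∑ _ω ∈ P, (1:ℝ))
        ≤ ∑ ω ∈ P, Real.exp (l * (∑ i : Fin n, S i (ω i) - (n:ℝ) * t)) := by
          apply Finset.sum_le_sum
          intro ω hω
          rw [hP, Finset.mem_filter] at hω
          have : (0:ℝ) ≤ l * (∑ i : Fin n, S i (ω i) - (n:ℝ) * t) :=
            mul_nonneg hl (by linarith [hω.2])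
          exact Real.one_le_exp this
      _ ≤ ∑ ω : Fin n → Ω₀, Real.exp (l * (∑ i : Fin n, S i (ω i) - (n:ℝ) * t)) :=
          Finset.sum_le_sum_of_subset_of_nonneg (Finset.filter_subset _ _)
            (fun ω _ _ => (Real.exp_pos _).le)
  have step2 : ∑ ω : Fin n → Ω₀, Real.exp (l * (∑ i : Fin n, S i (ω i) - (n:ℝ) * t))
      = Real.exp (-(l * ((n:ℝ) * t))) * ∑ ω : Fin n → Ω₀, ∏ i : Fin n,
          Real.exp (l * S i (ω i)) := by
    rw [Finset.mul_sum]
    apply Fintype.sum_congr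
    intro ω
    rw [← Real.exp_sum, ← Real.exp_add]
    congr 1
    rw [← Finset.mul_sum]
    ring
  have step3 : ∑ ω : Fin n → Ω₀, ∏ i : Fin n, Real.exp (l * S i (ω i))
      = ∏ i : Fin n, ∑ σ : Ω₀, Real.exp (l * S i σ) := by
    rw [← Fintype.piFinset_univ]
    exact Finset.sum_prod_piFinset Finset.univ (fun i σ => Real.exp (l * S i σ))
  have step4 : ∏ i : Fin n, ∑ σ : Ω₀, Real.exp (l * S i σ)
      ≤ ((Fintype.card Ω₀ : ℝ) * Real.exp (K * (Real.exp l - l - 1) / b)) ^ n := by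
    refine le_trans (Finset.prod_le_prod
      (g := fun _ => (Fintype.card Ω₀ : ℝ) * Real.exp (K * (Real.exp l - l - 1) / b))
      ?_ ?_) (le_of_eq ?_)
    · intro i _
      exact Finset.sum_nonneg fun σ _ => (Real.exp_pos _).le
    · intro i _
      exact mgf_single d b hd hb x (w i) (hw1 i) K (hK i) l hl
    · rw [Finset.prod_const, Finset.card_univ, Fintype.card_fin]
  have cardeq : (Fintype.card (Fin n → Ω₀) : ℝ) = (Fintype.card Ω₀ : ℝ) ^ n := by
    rw [Fintype.card_fun]
    push_cast
    simp
  calc (P.card : ℝ)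
      ≤ Real.exp (-(l * ((n:ℝ) * t))) * ∑ ω : Fin n → Ω₀, ∏ i : Fin n,
          Real.exp (l * S i (ω i)) := by rw [← step2]; exact step1
    _ ≤ Real.exp (-(l * ((n:ℝ) * t))) *
          ((Fintype.card Ω₀ : ℝ) * Real.exp (K * (Real.exp l - l - 1) / b)) ^ n := by
        apply mul_le_mul_of_nonneg_left _ (Real.exp_pos _).le
        rw [step3]; exact step4
    _ = (Fintype.card (Fin n → Ω₀) : ℝ) *
          Real.exp (-(l * ((n:ℝ) * t)) + n * (K * (Real.exp l - l - 1) / b)) := by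
        rw [mul_pow, cardeq, ← Real.exp_nat_mul, Real.exp_add]
        ring

lemma term_sum_zero (n d b : ℕ) (x j : Fin d) (i : Fin n) (hjx : j ≠ x) (c : ℝ) :
    ∑ ω : Fin n → (Fin d → Fin b) × (Fin d → Bool),
      (if (ω i).1 j = (ω i).1 x then (1:ℝ) else 0) * c *
        (if (ω i).2 j then (1:ℝ) else -1) * (if (ω i).2 x then (1:ℝ) else -1) = 0 := by
  classical
  set g : (Fin n → (Fin d → Fin b) × (Fin d → Bool)) →
      (Fin n → (Fin d → Fin b) × (Fin d → Bool)) :=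
    fun ω => Function.update ω i ((ω i).1, Function.update (ω i).2 j (!(ω i).2 j)) with hg
  have hgi : ∀ ω, g ω i = ((ω i).1, Function.update (ω i).2 j (!(ω i).2 j)) := by
    intro ω; simp [hg]
  apply Finset.sum_ninvolution g
  · intro ω
    rw [hgi]
    simp only [Function.update_self, Function.update_of_ne (Ne.symm hjx)]
    rcases Bool.dichotomy ((ω i).2 j) with h | h <;> simp only [h] <;>
      split_ifs <;> simp_all
  · intro ω _
    intro hEq
    have h2 := congrFun hEq i
    rw [hgi] at h2
    have h3 := congrArg Prod.snd h2
    simp only [] at h3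
    have h4 := congrFun h3 j
    rw [Function.update_self] at h4
    exact Bool.not_ne_self _ h4
  · intro ω; exact Finset.mem_univ _
  · intro ω
    funext k
    by_cases hk : k = i
    · subst hk
      rw [hgi, hgi]
      simp only []
      rw [Function.update_self, Bool.not_not, Function.update_idem,
        Function.update_eq_self]
    · simp [hg, Function.update_of_ne hk]

/-- Fix a coordinate `x`, let each `v_i ∈ [−1,1]^d` be `k`-sparse,
and let the hash pairs `(h_i, s_i)` be uniformly random and mutually independent
across clients (i.e. the whole family is uniform on the finite product space).
The binning error
`W = (1/n)·∑_i ∑_{l ≠ x} 1[h_i(l)=h_i(x)]·v_{i,l}·s_i(l)·s_i(x)`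
has mean zero, and `Pr[|W| ≥ t] ≤ 2·exp(−n·t²/(2·(k/b + t/3)))` for every `t > 0`. -/
theorem binning_error_concentration (n d b k : ℕ) (hn : 0 < n) (hd : 0 < d)
    (hb : 0 < b) (hk : 0 < k) (x : Fin d)
    (v : Fin n → Fin d → ℝ)
    (hsparse : ∀ i, (Finset.univ.filter (fun l => v i l ≠ 0)).card ≤ k)
    (hv : ∀ i l, v i l ∈ Set.Icc (-1 : ℝ) 1) :
    (∑ ω : Fin n → (Fin d → Fin b) × (Fin d → Bool),
        (1 / (n : ℝ)) * ∑ i : Fin n, ∑ l ∈ Finset.univ.erase x,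
          (if (ω i).1 l = (ω i).1 x then (1 : ℝ) else 0) * v i l *
            (if (ω i).2 l then (1 : ℝ) else -1) * (if (ω i).2 x then (1 : ℝ) else -1))
      / (Fintype.card (Fin n → (Fin d → Fin b) × (Fin d → Bool)) : ℝ) = 0
    ∧ ∀ t : ℝ, 0 < t →
      ((Finset.univ.filter (fun ω : Fin n → (Fin d → Fin b) × (Fin d → Bool) =>
          t ≤ |(1 / (n : ℝ)) * ∑ i : Fin n, ∑ l ∈ Finset.univ.erase x,
            (if (ω i).1 l = (ω i).1 x then (1 : ℝ) else 0) * v i l *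
              (if (ω i).2 l then (1 : ℝ) else -1) *
                (if (ω i).2 x then (1 : ℝ) else -1)|)).card : ℝ)
        / (Fintype.card (Fin n → (Fin d → Fin b) × (Fin d → Bool)) : ℝ)
        ≤ 2 * Real.exp (-(n * t ^ 2) / (2 * ((k : ℝ) / b + t / 3))) := by
  classical
  have hnR : (0:ℝ) < n := by exact_mod_cast hn
  have hbR : (0:ℝ) < b := by exact_mod_cast hb
  have hw1 : ∀ i j, |v i j| ≤ 1 := by
    intro i j
    have := hv i j
    rw [Set.mem_Icc] at this
    exact abs_le.mpr ⟨this.1, this.2⟩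
  have hKb : ∀ i, ∑ j ∈ Finset.univ.erase x, |v i j| ≤ (k:ℝ) := by
    intro i
    calc ∑ j ∈ Finset.univ.erase x, |v i j|
        ≤ ∑ j : Fin d, |v i j| :=
          Finset.sum_le_sum_of_subset_of_nonneg (Finset.erase_subset _ _)
            (fun j _ _ => abs_nonneg _)
      _ = ∑ j ∈ Finset.univ.filter (fun l => v i l ≠ 0), |v i j| := by
          rw [eq_comm]
          apply Finset.sum_subset (Finset.filter_subset _ _)
          intro j _ hj
          simp only [Finset.mem_filter, Finset.mem_univ, true_and, not_not] at hj
          simp [hj]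
      _ ≤ ∑ _j ∈ Finset.univ.filter (fun l => v i l ≠ 0), (1:ℝ) :=
          Finset.sum_le_sum fun j _ => hw1 i j
      _ = ((Finset.univ.filter (fun l => v i l ≠ 0)).card : ℝ) := by simp
      _ ≤ (k:ℝ) := by exact_mod_cast hsparse i
  constructor
  · -- mean zero
    have hnum : (∑ ω : Fin n → (Fin d → Fin b) × (Fin d → Bool),
        (1 / (n : ℝ)) * ∑ i : Fin n, ∑ l ∈ Finset.univ.erase x,
          (if (ω i).1 l = (ω i).1 x then (1 : ℝ) else 0) * v i l *
            (if (ω i).2 l then (1 : ℝ) else -1) * (if (ω i).2 x then (1 : ℝ) else -1)) = 0 := by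
      rw [← Finset.mul_sum]
      apply mul_eq_zero_of_right
      rw [Finset.sum_comm]
      apply Finset.sum_eq_zero
      intro i _
      rw [Finset.sum_comm]
      apply Finset.sum_eq_zero
      intro j hj
      exact term_sum_zero n d b x j i (Finset.mem_erase.mp hj).1 (v i j)
    rw [hnum, zero_div]
  · intro t ht
    set D : ℝ := (k:ℝ)/b + t/3 with hD
    have hV : (0:ℝ) < (k:ℝ)/b := by positivity
    have hDpos : (0:ℝ) < D := by rw [hD]; positivity
    set L : ℝ := t / D with hL
    have hL0 : 0 ≤ L := le_of_lt (div_pos ht hDpos)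
    have hL3 : L < 3 := by
      rw [hL, div_lt_iff₀ hDpos]
      rw [hD]
      linarith
    have hg := aux_g_bound hL0 hL3
    have hA := onesided n d b hn hd hb x v hw1 (k:ℝ) hKb t L hL0
    have hB := onesided n d b hn hd hb x (fun i j => -(v i j))
      (fun i j => by simpa using hw1 i j)
      (k:ℝ) (fun i => by simpa using hKb i) t L hL0
    set Ω := Fin n → (Fin d → Fin b) × (Fin d → Bool)
    have hΩne : Nonempty Ω := ⟨fun _ => (fun _ => ⟨0, hb⟩, fun _ => true)⟩
    have hcardpos : (0:ℝ) < (Fintype.card Ω : ℝ) := by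
      have := Fintype.card_pos (α := Ω)
      exact_mod_cast this
    -- subset of union
    have hsubset : (Finset.univ.filter (fun ω : Ω =>
          t ≤ |(1 / (n : ℝ)) * ∑ i : Fin n, ∑ l ∈ Finset.univ.erase x,
            (if (ω i).1 l = (ω i).1 x then (1 : ℝ) else 0) * v i l *
              (if (ω i).2 l then (1 : ℝ) else -1) *
                (if (ω i).2 x then (1 : ℝ) else -1)|))
        ⊆ (Finset.univ.filter (fun ω : Ω =>
            (n:ℝ) * t ≤ ∑ i : Fin n, ∑ j ∈ Finset.univ.erase x,
              (if (ω i).1 j = (ω i).1 x then (1 : ℝ) else 0) * v i j *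
                (if (ω i).2 j then (1 : ℝ) else -1) *
                  (if (ω i).2 x then (1 : ℝ) else -1)))
          ∪ (Finset.univ.filter (fun ω : Ω =>
            (n:ℝ) * t ≤ ∑ i : Fin n, ∑ j ∈ Finset.univ.erase x,
              (if (ω i).1 j = (ω i).1 x then (1 : ℝ) else 0) * (fun i j => -(v i j)) i j *
                (if (ω i).2 j then (1 : ℝ) else -1) *
                  (if (ω i).2 x then (1 : ℝ) else -1))) := by
      intro ω hω
      rw [Finset.mem_filter] at hω
      set Sv : ℝ := ∑ i : Fin n, ∑ l ∈ Finset.univ.erase x,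
        (if (ω i).1 l = (ω i).1 x then (1 : ℝ) else 0) * v i l *
          (if (ω i).2 l then (1 : ℝ) else -1) * (if (ω i).2 x then (1 : ℝ) else -1) with hSv
      have habs : (n:ℝ) * t ≤ |Sv| := by
        have h2 := hω.2
        rw [abs_mul, abs_of_nonneg (by positivity : (0:ℝ) ≤ 1/(n:ℝ))] at h2
        calc (n:ℝ)*t ≤ (n:ℝ) * (1/(n:ℝ) * |Sv|) :=
              mul_le_mul_of_nonneg_left h2 hnR.le
          _ = |Sv| := by field_simp
      have hneg : ∑ i : Fin n, ∑ j ∈ Finset.univ.erase x,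
          (if (ω i).1 j = (ω i).1 x then (1 : ℝ) else 0) * (fun i j => -(v i j)) i j *
            (if (ω i).2 j then (1 : ℝ) else -1) * (if (ω i).2 x then (1 : ℝ) else -1)
          = -Sv := by
        rw [hSv, ← Finset.sum_neg_distrib]
        apply Finset.sum_congr rfl
        intro i _
        rw [← Finset.sum_neg_distrib]
        apply Finset.sum_congr rfl
        intro j _
        ring
      rw [Finset.mem_union, Finset.mem_filter, Finset.mem_filter]
      rcases le_abs.mp habs with h | h
      · exact Or.inl ⟨Finset.mem_univ _, h⟩
      · refine Or.inr ⟨Finset.mem_univ _, ?_⟩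
        rw [hneg]
        exact h
    have hcardle : ((Finset.univ.filter (fun ω : Ω =>
          t ≤ |(1 / (n : ℝ)) * ∑ i : Fin n, ∑ l ∈ Finset.univ.erase x,
            (if (ω i).1 l = (ω i).1 x then (1 : ℝ) else 0) * v i l *
              (if (ω i).2 l then (1 : ℝ) else -1) *
                (if (ω i).2 x then (1 : ℝ) else -1)|)).card : ℝ)
        ≤ 2 * (Fintype.card Ω : ℝ) *
            Real.exp (-(L * ((n:ℝ) * t)) + n * ((k:ℝ) * (Real.exp L - L - 1) / b)) := by
      have h1 := le_trans (Finset.card_le_card hsubset) (Finset.card_union_le _ _)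
      have h1R : ((Finset.univ.filter (fun ω : Ω =>
          t ≤ |(1 / (n : ℝ)) * ∑ i : Fin n, ∑ l ∈ Finset.univ.erase x,
            (if (ω i).1 l = (ω i).1 x then (1 : ℝ) else 0) * v i l *
              (if (ω i).2 l then (1 : ℝ) else -1) *
                (if (ω i).2 x then (1 : ℝ) else -1)|)).card : ℝ)
          ≤ ((Finset.univ.filter (fun ω : Ω =>
            (n:ℝ) * t ≤ ∑ i : Fin n, ∑ j ∈ Finset.univ.erase x,
              (if (ω i).1 j = (ω i).1 x then (1 : ℝ) else 0) * v i j *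
                (if (ω i).2 j then (1 : ℝ) else -1) *
                  (if (ω i).2 x then (1 : ℝ) else -1))).card : ℝ)
            + ((Finset.univ.filter (fun ω : Ω =>
            (n:ℝ) * t ≤ ∑ i : Fin n, ∑ j ∈ Finset.univ.erase x,
              (if (ω i).1 j = (ω i).1 x then (1 : ℝ) else 0) * (fun i j => -(v i j)) i j *
                (if (ω i).2 j then (1 : ℝ) else -1) *
                  (if (ω i).2 x then (1 : ℝ) else -1))).card : ℝ) := by
        exact_mod_cast h1
      linarith [hA, hB]
    -- exponent bound
    have hexp_le : -(L * ((n:ℝ) * t)) + n * ((k:ℝ) * (Real.exp L - L - 1) / b)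
        ≤ -((n:ℝ) * t ^ 2) / (2 * D) := by
      have h2 : 1 - L/3 = ((k:ℝ)/b)/D := by
        have hb0 : (b:ℝ) ≠ 0 := hbR.ne'
        have hD0 : D ≠ 0 := hDpos.ne'
        rw [hL, hD]
        field_simp
        ring
      have key : -(L * ((n:ℝ) * t)) + (n:ℝ) * (((k:ℝ)/b) * (L^2/(2*(1-L/3))))
          = -((n:ℝ) * t ^ 2) / (2 * D) := by
        rw [h2, hL]
        field_simp
        ring
      have hmul : (n:ℝ) * ((k:ℝ) * (Real.exp L - L - 1) / b)
          ≤ (n:ℝ) * (((k:ℝ)/b) * (L^2/(2*(1-L/3)))) := by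
        apply mul_le_mul_of_nonneg_left _ hnR.le
        rw [show (k:ℝ) * (Real.exp L - L - 1) / b = ((k:ℝ)/b) * (Real.exp L - L - 1) from by ring]
        exact mul_le_mul_of_nonneg_left hg hV.le
      linarith [key]
    rw [div_le_iff₀ hcardpos]
    calc ((Finset.univ.filter (fun ω : Ω =>
          t ≤ |(1 / (n : ℝ)) * ∑ i : Fin n, ∑ l ∈ Finset.univ.erase x,
            (if (ω i).1 l = (ω i).1 x then (1 : ℝ) else 0) * v i l *
              (if (ω i).2 l then (1 : ℝ) else -1) *
                (if (ω i).2 x then (1 : ℝ) else -1)|)).card : ℝ)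
        ≤ 2 * (Fintype.card Ω : ℝ) *
            Real.exp (-(L * ((n:ℝ) * t)) + n * ((k:ℝ) * (Real.exp L - L - 1) / b)) := hcardle
      _ ≤ 2 * (Fintype.card Ω : ℝ) * Real.exp (-((n:ℝ) * t ^ 2) / (2 * D)) := by
          apply mul_le_mul_of_nonneg_left _ (by positivity)
          exact Real.exp_le_exp.mpr hexp_le
      _ = 2 * Real.exp (-((n:ℝ) * t ^ 2) / (2 * D)) * (Fintype.card Ω : ℝ) := by ring
end

section
/- Let β > 0 and let r_1,…,r_n be i.i.d. random variables with the Laplace distribution Lap(0, β). Then for every a with 0 < a ≤ 2nβ, Pr[ |∑_{i=1}^{n} r_i| ≥ a ] ≤ 2·exp(−a²/(8·n·β²)). -/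
open MeasureTheory Real Set
open scoped ENNReal NNReal

private lemma exp_neg_mul_Ioi_integral {c : ℝ} (hc : 0 < c) :
    ∫ x in Ioi (0:ℝ), Real.exp (-(c * x)) = c⁻¹ := by
  have h := integral_comp_mul_left_Ioi (fun x => Real.exp (-x)) 0 hc
  simp only [mul_zero, integral_exp_neg_Ioi, neg_zero, Real.exp_zero, smul_eq_mul, mul_one] at h
  exact h

private lemma exp_neg_mul_Ioi_integrable {c : ℝ} (hc : 0 < c) :
    IntegrableOn (fun x => Real.exp (-(c * x))) (Ioi (0:ℝ)) := by
  simpa [neg_mul] using exp_neg_integrableOn_Ioi 0 hc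

private lemma laplace_aux (β : ℝ) (hβ : 0 < β) {t : ℝ} (ht : |t| < 1/β) :
    Integrable (fun x : ℝ => Real.exp (t * x - |x| / β)) ∧
    ∫ x : ℝ, Real.exp (t * x - |x| / β) = (1/β - t)⁻¹ + (1/β + t)⁻¹ := by
  obtain ⟨ht1, ht2⟩ := abs_lt.mp ht
  have hc₁ : 0 < 1/β - t := by linarith
  have hc₂ : 0 < 1/β + t := by linarith
  have heq₁ : EqOn (fun x : ℝ => Real.exp (-((1/β - t) * x)))
      (fun x => Real.exp (t * x - |x| / β)) (Ioi 0) := by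
    intro x hx
    simp only
    rw [abs_of_pos hx]
    congr 1
    ring
  have heq₂ : EqOn (fun x : ℝ => Real.exp (-((1/β + t) * (-x))))
      (fun x => Real.exp (t * x - |x| / β)) (Iic 0) := by
    intro x hx
    have hx' : x ≤ 0 := hx
    simp only
    rw [abs_of_nonpos hx']
    congr 1
    ring
  have hIoi : IntegrableOn (fun x : ℝ => Real.exp (t * x - |x| / β)) (Ioi 0) :=
    (exp_neg_mul_Ioi_integrable hc₁).congr_fun heq₁ measurableSet_Ioi
  have hIic : IntegrableOn (fun x : ℝ => Real.exp (-((1/β + t) * (-x)))) (Iic 0) := by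
    rw [← Measure.map_neg_eq_self (volume : Measure ℝ)]
    have m : MeasurableEmbedding (fun x : ℝ => -x) := (Homeomorph.neg ℝ).measurableEmbedding
    rw [m.integrableOn_map_iff]
    simp_rw [Function.comp_def, neg_neg, neg_preimage, neg_Iic, neg_zero]
    exact Iff.mpr integrableOn_Ici_iff_integrableOn_Ioi (exp_neg_mul_Ioi_integrable hc₂)
  have hIic' : IntegrableOn (fun x : ℝ => Real.exp (t * x - |x| / β)) (Iic 0) :=
    hIic.congr_fun heq₂ measurableSet_Iic
  have hint : Integrable (fun x : ℝ => Real.exp (t * x - |x| / β)) := by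
    rw [← integrableOn_univ, ← Iic_union_Ioi (a := (0:ℝ))]
    exact hIic'.union hIoi
  refine ⟨hint, ?_⟩
  rw [← intervalIntegral.integral_Iic_add_Ioi hIic' hIoi]
  have e₁ : ∫ x in Ioi (0:ℝ), Real.exp (t * x - |x| / β) = (1/β - t)⁻¹ := by
    rw [← setIntegral_congr_fun measurableSet_Ioi heq₁]
    exact exp_neg_mul_Ioi_integral hc₁
  have e₂ : ∫ x in Iic (0:ℝ), Real.exp (t * x - |x| / β) = (1/β + t)⁻¹ := by
    rw [← setIntegral_congr_fun measurableSet_Iic heq₂]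
    have := integral_comp_neg_Iic (0:ℝ) (fun y => Real.exp (-((1/β + t) * y)))
    rw [neg_zero] at this
    rw [this]
    exact exp_neg_mul_Ioi_integral hc₂
  rw [e₁, e₂]
  ring

private lemma laplace_eq (β : ℝ) : laplaceMeasure 0 β =
    volume.withDensity (fun x => ENNReal.ofReal ((1 / (2 * β)) * Real.exp (-|x| / β))) := by
  unfold laplaceMeasure
  congr 1
  funext x
  rw [sub_zero]

private lemma laplace_density_meas (β : ℝ) :
    Measurable (fun x : ℝ => (1 / (2 * β)) * Real.exp (-|x| / β)) := by
  fun_prop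

private lemma laplace_density_nonneg (β : ℝ) (hβ : 0 < β) (x : ℝ) :
    0 ≤ (1 / (2 * β)) * Real.exp (-|x| / β) := by positivity

private lemma laplace_key (β : ℝ) (hβ : 0 < β) (t x : ℝ) :
    Real.exp (t * x) * ((1 / (2 * β)) * Real.exp (-|x| / β)) =
      (1 / (2 * β)) * Real.exp (t * x - |x| / β) := by
  rw [sub_eq_add_neg, Real.exp_add, neg_div]
  ring

private lemma laplace_mgf (β : ℝ) (hβ : 0 < β) {t : ℝ} (ht : |t| < 1/β) :
    Integrable (fun x : ℝ => Real.exp (t * x)) (laplaceMeasure 0 β) ∧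
    ∫ x, Real.exp (t * x) ∂(laplaceMeasure 0 β) = (1 - t^2 * β^2)⁻¹ := by
  obtain ⟨hint, hval⟩ := laplace_aux β hβ ht
  obtain ⟨ht1, ht2⟩ := abs_lt.mp ht
  have hc₁ : 0 < 1/β - t := by linarith
  have hc₂ : 0 < 1/β + t := by linarith
  rw [laplace_eq]
  have hmeas := laplace_density_meas β
  constructor
  · rw [integrable_withDensity_iff hmeas.ennreal_ofReal
      (Filter.Eventually.of_forall fun x => ENNReal.ofReal_lt_top)]
    have : (fun x : ℝ => Real.exp (t * x) * (ENNReal.ofReal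
        ((1 / (2 * β)) * Real.exp (-|x| / β))).toReal) =
        fun x => (1 / (2 * β)) * Real.exp (t * x - |x| / β) := by
      funext x
      rw [ENNReal.toReal_ofReal (laplace_density_nonneg β hβ x), laplace_key β hβ t x]
    rw [this]
    exact hint.const_mul _
  · have hrw : (volume : Measure ℝ).withDensity
        (fun x => ENNReal.ofReal ((1 / (2 * β)) * Real.exp (-|x| / β))) =
        (volume : Measure ℝ).withDensity
        (fun x => (((1 / (2 * β)) * Real.exp (-|x| / β)).toNNReal : ℝ≥0∞)) := rfl
    rw [hrw, integral_withDensity_eq_integral_smul hmeas.real_toNNReal]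
    have : (fun x : ℝ => ((1 / (2 * β)) * Real.exp (-|x| / β)).toNNReal • Real.exp (t * x)) =
        fun x => (1 / (2 * β)) * Real.exp (t * x - |x| / β) := by
      funext x
      rw [NNReal.smul_def, Real.coe_toNNReal _ (laplace_density_nonneg β hβ x)]
      simp only [smul_eq_mul, sub_eq_add_neg, Real.exp_add, neg_div]
      ring
    rw [this, integral_const_mul, hval]
    have hβ' : β ≠ 0 := hβ.ne'
    have h1 : 1 - t^2 * β^2 ≠ 0 := by
      have : 1 - t^2 * β^2 = β^2 * ((1/β - t) * (1/β + t)) := by field_simp; ring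
      rw [this]
      positivity
    have h2 : 1/β - t ≠ 0 := hc₁.ne'
    have h3 : 1/β + t ≠ 0 := hc₂.ne'
    have h4 : 1 - β * t ≠ 0 := by
      have e : 1 - β * t = β * (1/β - t) := by field_simp [mul_comm]
      rw [e]; exact mul_ne_zero hβ' h2
    have h5 : 1 + β * t ≠ 0 := by
      have e : 1 + β * t = β * (1/β + t) := by field_simp [mul_comm]
      rw [e]; exact mul_ne_zero hβ' h3
    have i1 : (1/β - t)⁻¹ = β / (1 - β*t) := by
      rw [show 1/β - t = (1 - β*t)/β by field_simp, inv_div]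
    have i2 : (1/β + t)⁻¹ = β / (1 + β*t) := by
      rw [show 1/β + t = (1 + β*t)/β by field_simp [mul_comm], inv_div]
    rw [i1, i2, div_add_div _ _ h4 h5]
    rw [show (1 - t^2 * β^2)⁻¹ = ((1 - β*t) * (1 + β*t))⁻¹ by rw [show (1 - β*t) * (1 + β*t) = 1 - t^2*β^2 by ring]]
    rw [inv_eq_one_div, div_mul_div_comm]
    rw [div_eq_div_iff (by positivity) (mul_ne_zero h4 h5)]
    ring

private lemma laplace_isProb (β : ℝ) (hβ : 0 < β) :
    IsProbabilityMeasure (laplaceMeasure 0 β) := by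
  have h0 : |(0:ℝ)| < 1/β := by
    rw [abs_zero]; positivity
  obtain ⟨hint, hval⟩ := laplace_mgf β hβ h0
  simp only [zero_mul, Real.exp_zero] at hval
  rw [integral_const, smul_eq_mul, mul_one] at hval
  norm_num at hval
  constructor
  rwa [← ENNReal.toReal_eq_one_iff]

private lemma pi_integral_pow (μ : Measure ℝ) [SigmaFinite μ] (n : ℕ) (f : ℝ → ℝ) :
    ∫ x : Fin n → ℝ, ∏ i, f (x i) ∂(Measure.pi fun _ : Fin n => μ) = (∫ x, f x ∂μ) ^ n := by
  letI M : MeasureSpace ℝ := @MeasureSpace.mk ℝ Real.measurableSpace μ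
  haveI : SigmaFinite (volume : Measure ℝ) := ‹SigmaFinite μ›
  have h := MeasureTheory.integral_fintype_prod_eq_pow (𝕜 := ℝ) (ι := Fin n) f (μ := μ)
  rw [Fintype.card_fin] at h
  exact h

private lemma pi_integrable_prod (μ : Measure ℝ) [SigmaFinite μ] (n : ℕ) {f : ℝ → ℝ}
    (hf : Integrable f μ) :
    Integrable (fun x : Fin n → ℝ => ∏ i, f (x i)) (Measure.pi fun _ : Fin n => μ) := by
  letI M : MeasureSpace ℝ := @MeasureSpace.mk ℝ Real.measurableSpace μ
  haveI : SigmaFinite (volume : Measure ℝ) := ‹SigmaFinite μ›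
  exact Integrable.fintype_prod (f := fun _ : Fin n => f) (fun _ => hf)

private lemma inv_one_sub_le_exp {u : ℝ} (hu0 : 0 ≤ u) (hu : u ≤ 1/4) :
    (1 - u)⁻¹ ≤ Real.exp (2 * u) := by
  have h1 : 0 < 1 - u := by linarith
  have h3 : 1 + 2*u ≤ Real.exp (2*u) := by
    have := Real.add_one_le_exp (2*u); linarith
  have h2 : 1 ≤ Real.exp (2*u) * (1 - u) := by nlinarith
  rw [inv_le_iff_one_le_mul₀ h1]
  linarith [mul_comm (Real.exp (2*u)) (1-u)]

/-- If `r_1,…,r_n` are i.i.d. `Lap(0, β)` (modeled by the product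
measure on `ℝ^n`), then for every `0 < a ≤ 2nβ`,
`Pr[|∑_i r_i| ≥ a] ≤ 2·exp(−a²/(8·n·β²))`. -/
theorem laplace_sum_concentration (n : ℕ) (β : ℝ) (hβ : 0 < β)
    (a : ℝ) (ha : 0 < a) (ha2 : a ≤ 2 * n * β) :
    (Measure.pi fun _ : Fin n => laplaceMeasure 0 β) {r | a ≤ |∑ i : Fin n, r i|}
      ≤ ENNReal.ofReal (2 * Real.exp (-a ^ 2 / (8 * n * β ^ 2))) := by
  have hn : 0 < n := by
    rcases Nat.eq_zero_or_pos n with h | h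
    · subst h; norm_num at ha2; linarith
    · exact h
  have hn' : (0:ℝ) < n := by exact_mod_cast hn
  set μ := laplaceMeasure 0 β with hμ
  haveI : IsProbabilityMeasure μ := laplace_isProb β hβ
  set P := (Measure.pi fun _ : Fin n => μ) with hP
  haveI : IsProbabilityMeasure P := by rw [hP]; infer_instance
  set t := a / (4 * n * β^2) with ht_def
  have ht0 : 0 < t := by positivity
  have htβ : t * β ≤ 1/2 := by
    rw [ht_def, div_mul_eq_mul_div, div_le_iff₀ (by positivity)]
    nlinarith
  have ht_abs : |t| < 1/β := by
    rw [abs_of_pos ht0, lt_div_iff₀ hβ]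
    linarith
  have ht_abs' : |(-t)| < 1/β := by rwa [abs_neg]
  set S := fun r : Fin n → ℝ => ∑ i, r i with hS
  -- mgf computations
  have key : ∀ s : ℝ, |s| < 1/β →
      Integrable (fun ω => Real.exp (s * S ω)) P ∧
      ∫ ω, Real.exp (s * S ω) ∂P = ((1 - s^2 * β^2)⁻¹) ^ n := by
    intro s hs
    obtain ⟨hsint, hsval⟩ := laplace_mgf β hβ hs
    have hfe : (fun x : Fin n → ℝ => ∏ i, Real.exp (s * x i)) =
        fun ω => Real.exp (s * S ω) := by
      funext x
      rw [hS, ← Real.exp_sum, Finset.mul_sum]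
    constructor
    · rw [← hfe]
      exact pi_integrable_prod μ n hsint
    · rw [← hfe, hP]
      rw [show (fun x : Fin n → ℝ => ∏ i, Real.exp (s * x i)) =
        (fun x : Fin n → ℝ => ∏ i, (fun y => Real.exp (s * y)) (x i)) from rfl]
      rw [pi_integral_pow μ n (fun y => Real.exp (s * y))]
      rw [hsval]
  have hu0 : 0 ≤ t^2 * β^2 := by positivity
  have hu : t^2 * β^2 ≤ 1/4 := by
    have h := mul_self_le_mul_self (by positivity : (0:ℝ) ≤ t*β) htβ
    nlinarith [h]
  have hIle : (1 - t^2 * β^2)⁻¹ ≤ Real.exp (2 * (t^2 * β^2)) := inv_one_sub_le_exp hu0 hu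
  have hIpos : 0 ≤ (1 - t^2 * β^2)⁻¹ := by
    have : (0:ℝ) < 1 - t^2*β^2 := by linarith
    positivity
  have hbound : Real.exp (-(t * a)) * ((1 - t^2 * β^2)⁻¹) ^ n
      ≤ Real.exp (-a ^ 2 / (8 * n * β ^ 2)) := by
    have h1 : ((1 - t^2 * β^2)⁻¹) ^ n ≤ (Real.exp (2 * (t^2 * β^2))) ^ n :=
      pow_le_pow_left₀ hIpos hIle n
    have h2 : (Real.exp (2 * (t^2 * β^2))) ^ n = Real.exp (n * (2 * (t^2 * β^2))) := by
      rw [← Real.exp_nat_mul]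
    have h3 : -(t * a) + n * (2 * (t^2 * β^2)) = -a ^ 2 / (8 * n * β ^ 2) := by
      rw [ht_def]
      field_simp
      ring
    calc Real.exp (-(t * a)) * ((1 - t^2 * β^2)⁻¹) ^ n
        ≤ Real.exp (-(t * a)) * Real.exp (n * (2 * (t^2 * β^2))) := by
          rw [← h2]; exact mul_le_mul_of_nonneg_left h1 (Real.exp_nonneg _)
      _ = Real.exp (-(t * a) + n * (2 * (t^2 * β^2))) := (Real.exp_add _ _).symm
      _ = Real.exp (-a ^ 2 / (8 * n * β ^ 2)) := by rw [h3]
  -- upper tail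
  have htail1 : (P {ω | a ≤ S ω}).toReal ≤ Real.exp (-a ^ 2 / (8 * n * β ^ 2)) := by
    obtain ⟨hi, hv⟩ := key t ht_abs
    have h := ProbabilityTheory.measure_ge_le_exp_mul_mgf (X := S) (μ := P) a ht0.le hi
    rw [ProbabilityTheory.mgf] at h
    rw [hv] at h
    refine h.trans ?_
    rw [neg_mul]
    exact hbound
  -- lower tail
  have htail2 : (P {ω | S ω ≤ -a}).toReal ≤ Real.exp (-a ^ 2 / (8 * n * β ^ 2)) := by
    obtain ⟨hi, hv⟩ := key (-t) ht_abs'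
    have h := ProbabilityTheory.measure_le_le_exp_mul_mgf (X := S) (μ := P) (-a)
      (neg_nonpos.mpr ht0.le) hi
    rw [ProbabilityTheory.mgf] at h
    rw [hv] at h
    rw [neg_sq] at h
    refine h.trans ?_
    rw [show -(-t) * (-a) = -(t * a) by ring]
    exact hbound
  -- assemble
  have hsub : {r : Fin n → ℝ | a ≤ |∑ i, r i|} ⊆ {ω | a ≤ S ω} ∪ {ω | S ω ≤ -a} := by
    intro r hr
    have hr' : a ≤ |∑ i : Fin n, r i| := hr
    rcases le_abs.mp hr' with h | h
    · exact Or.inl h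
    · exact Or.inr (by simpa using le_neg.mp h)
  have hexp : (0:ℝ) ≤ Real.exp (-a ^ 2 / (8 * n * β ^ 2)) := Real.exp_nonneg _
  calc P {r | a ≤ |∑ i : Fin n, r i|}
      ≤ P ({ω | a ≤ S ω} ∪ {ω | S ω ≤ -a}) := measure_mono hsub
    _ ≤ P {ω | a ≤ S ω} + P {ω | S ω ≤ -a} := measure_union_le _ _
    _ ≤ ENNReal.ofReal (Real.exp (-a ^ 2 / (8 * n * β ^ 2)))
        + ENNReal.ofReal (Real.exp (-a ^ 2 / (8 * n * β ^ 2))) := by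
        gcongr
        · exact (ENNReal.le_ofReal_iff_toReal_le (measure_ne_top P _) hexp).mpr htail1
        · exact (ENNReal.le_ofReal_iff_toReal_le (measure_ne_top P _) hexp).mpr htail2
    _ = ENNReal.ofReal (2 * Real.exp (-a ^ 2 / (8 * n * β ^ 2))) := by
        rw [← ENNReal.ofReal_add hexp hexp, two_mul]
end

section
/- Let S be a nonempty finite set, let (μ_v)_{v ∈ S} be a family of probability measures on a measurable space Z, let ε > 0, δ ≥ 0, and suppose that for all v, v′ ∈ S and all measurable A ⊆ Z, μ_v(A) ≤ exp(ε)·μ_{v′}(A) + δ. For η ∈ [0,1], define the degraded mechanism ν_v = η·μ_v + (1−η)·(1/|S|)·∑_{u ∈ S} μ_u. Then for all v, v′ ∈ S and all measurable A ⊆ Z, ν_v(A) ≤ (1 + η·(exp(ε) − 1))·ν_{v′}(A) + η·δ; that is, ν_v and ν_{v′} are (log(1 + η·(exp(ε) − 1)), η·δ)-close. -/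
/-!
Let `t` be the least of the values `μ_u(A)`. Then `μ_v(A) ≤ e^ε t + δ`, and `t` is at most
`μ_{v'}(A)` and at most the average of the `μ_u(A)`, hence at most `ν_{v'}(A)`. Writing
`e^ε t = t + (e^ε - 1) t`, the first part of `η μ_v(A)` is absorbed by `η μ_{v'}(A)` and the
second by `η (e^ε - 1) ν_{v'}(A)`.
-/

open MeasureTheory

theorem mix_le_one_add_mul_mix_add_mul {R : Type*} [CommSemiring R] [PartialOrder R]
    [CanonicallyOrderedAdd R] [IsOrderedRing R] {η η' D x y m t δ : R}
    (hη : η + η' = 1) (hxt : x ≤ (1 + D) * t + δ) (hty : t ≤ y) (htm : t ≤ m) :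
    η * x + η' * m ≤ (1 + η * D) * (η * y + η' * m) + η * δ := by
  have ht : t ≤ η * y + η' * m := calc
    t = η * t + η' * t := by rw [← add_mul, hη, one_mul]
    _ ≤ η * y + η' * m := by gcongr
  calc η * x + η' * m ≤ η * ((1 + D) * t + δ) + η' * m := by gcongr
    _ = η * t + η * D * t + η' * m + η * δ := by ring
    _ ≤ η * y + η * D * (η * y + η' * m) + η' * m + η * δ := by gcongr
    _ = (1 + η * D) * (η * y + η' * m) + η * δ := by ring

theorem ENNReal.le_sum_div_card_of_forall_le {ι : Type*} [Fintype ι] [Nonempty ι]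
    {f : ι → ENNReal} {t : ENNReal} (h : ∀ i, t ≤ f i) :
    t ≤ (∑ i, f i) / Fintype.card ι := by
  rw [ENNReal.le_div_iff_mul_le (by simp) (by simp), mul_comm, ← nsmul_eq_mul]
  exact Finset.card_nsmul_le_sum _ _ _ fun i _ => h i

theorem degrading_channel_privacy_amplification_general
    {S : Type*} [Fintype S] [Nonempty S]
    {Z : Type*} [MeasurableSpace Z]
    (μ : S → Measure Z)
    (ε δ η : ℝ) (hε : 0 < ε) (hη0 : 0 ≤ η) (hη1 : η ≤ 1)
    (hclose : ∀ v v' : S, ∀ A : Set Z, MeasurableSet A →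
      μ v A ≤ ENNReal.ofReal (Real.exp ε) * μ v' A + ENNReal.ofReal δ) :
    ∀ v v' : S, ∀ A : Set Z, MeasurableSet A →
      (ENNReal.ofReal η • μ v
          + ENNReal.ofReal ((1 - η) / (Fintype.card S : ℝ)) • ∑ u : S, μ u) A
        ≤ ENNReal.ofReal (1 + η * (Real.exp ε - 1)) *
            ((ENNReal.ofReal η • μ v'
              + ENNReal.ofReal ((1 - η) / (Fintype.card S : ℝ)) • ∑ u : S, μ u) A)
          + ENNReal.ofReal (η * δ) := by
  intro v v' A hA
  have hexp : 0 ≤ Real.exp ε - 1 := by linarith [Real.one_le_exp hε.le]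
  have hweights : ENNReal.ofReal η + ENNReal.ofReal (1 - η) = 1 := by
    rw [← ENNReal.ofReal_add hη0 (by linarith), add_sub_cancel, ENNReal.ofReal_one]
  have hE : ENNReal.ofReal (Real.exp ε) = 1 + ENNReal.ofReal (Real.exp ε - 1) := by
    rw [← ENNReal.ofReal_one, ← ENNReal.ofReal_add zero_le_one hexp, add_sub_cancel]
  have hfactor : ENNReal.ofReal (1 + η * (Real.exp ε - 1))
      = 1 + ENNReal.ofReal η * ENNReal.ofReal (Real.exp ε - 1) := by
    rw [ENNReal.ofReal_add zero_le_one (by positivity), ENNReal.ofReal_one, ENNReal.ofReal_mul hη0]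
  have havg : ∀ B, ENNReal.ofReal ((1 - η) / (Fintype.card S : ℝ)) * B
      = ENNReal.ofReal (1 - η) * (B / Fintype.card S) := fun B => by
    rw [ENNReal.ofReal_div_of_pos (by positivity), ENNReal.ofReal_natCast, div_eq_mul_inv, div_eq_mul_inv,
      mul_right_comm, mul_assoc]
  obtain ⟨u₀, hu₀⟩ := Finite.exists_min fun u => μ u A
  simp only [Measure.add_apply, Measure.smul_apply, smul_eq_mul, Measure.finsetSum_apply, havg,
    hfactor, ENNReal.ofReal_mul hη0]
  exact mix_le_one_add_mul_mix_add_mul hweights (hE ▸ hclose v u₀ A hA) (hu₀ v')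
    (ENNReal.le_sum_div_card_of_forall_le hu₀)

/-- Let `S` be a nonempty finite set, `(μ_v)_{v ∈ S}` a family of
probability measures on `Z` with `μ_v(A) ≤ exp(ε)·μ_{v'}(A) + δ` for all `v, v'` and
measurable `A`. For `η ∈ [0,1]` define the degraded mechanism
`ν_v = η·μ_v + (1−η)·(1/|S|)·∑_u μ_u`. Then for all `v, v'` and measurable `A`,
`ν_v(A) ≤ (1 + η·(exp(ε) − 1))·ν_{v'}(A) + η·δ`. -/
theorem degrading_channel_privacy_amplification
    {S : Type*} [Fintype S] [Nonempty S]
    {Z : Type*} [MeasurableSpace Z]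
    (μ : S → Measure Z) [∀ v, IsProbabilityMeasure (μ v)]
    (ε δ η : ℝ) (hε : 0 < ε) (hδ : 0 ≤ δ) (hη0 : 0 ≤ η) (hη1 : η ≤ 1)
    (hclose : ∀ v v' : S, ∀ A : Set Z, MeasurableSet A →
      μ v A ≤ ENNReal.ofReal (Real.exp ε) * μ v' A + ENNReal.ofReal δ) :
    ∀ v v' : S, ∀ A : Set Z, MeasurableSet A →
      (ENNReal.ofReal η • μ v
          + ENNReal.ofReal ((1 - η) / (Fintype.card S : ℝ)) • ∑ u : S, μ u) A
        ≤ ENNReal.ofReal (1 + η * (Real.exp ε - 1)) *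
            ((ENNReal.ofReal η • μ v'
              + ENNReal.ofReal ((1 - η) / (Fintype.card S : ℝ)) • ∑ u : S, μ u) A)
          + ENNReal.ofReal (η * δ) :=
  degrading_channel_privacy_amplification_general μ ε δ η hε hη0 hη1 hclose
end

section
/- Let μ and μ′ be probability measures on a measurable space α that are (ε₁,δ₁)-close, and let κ and κ′ be Markov kernels from α to a measurable space β such that for every a ∈ α the probability measures κ(a) and κ′(a) are (ε₂,δ₂)-close. Then the joint measures μ ⊗ κ and μ′ ⊗ κ′ on α × β (given by (μ ⊗ κ)(S) = ∫_α κ(a)({y : (a,y) ∈ S}) dμ(a), and similarly for μ′ ⊗ κ′) are (ε₁+ε₂, δ₁+δ₂)-close. -/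
open MeasureTheory ProbabilityTheory Set

lemma aux_lintegral_close {α : Type*} [MeasurableSpace α]
    (μ μ' : Measure α) (e d : ENNReal)
    (hμ : ∀ A : Set α, MeasurableSet A → μ A ≤ e * μ' A + d)
    (h : α → ENNReal) (hm : Measurable h) (hb : ∀ a, h a ≤ 1) :
    ∫⁻ a, h a ∂μ ≤ e * ∫⁻ a, h a ∂μ' + d := by
  set f : α → ℝ := fun a => (h a).toReal with hf
  have hfm : Measurable f := hm.ennreal_toReal
  have hfb : ∀ a, f a ≤ 1 := fun a => by
    simpa using ENNReal.toReal_mono ENNReal.one_ne_top (hb a)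
  have hof : ∀ a, ENNReal.ofReal (f a) = h a := fun a =>
    ENNReal.ofReal_toReal (lt_of_le_of_lt (hb a) ENNReal.one_lt_top).ne
  have key : ∀ (ν : Measure α), ∫⁻ a, h a ∂ν = ∫⁻ t in Ioi (0:ℝ), ν {a | t < f a} := by
    intro ν
    rw [← lintegral_eq_lintegral_meas_lt ν
      (Filter.Eventually.of_forall fun a => ENNReal.toReal_nonneg) hfm.aemeasurable]
    exact lintegral_congr fun a => (hof a).symm
  have hset : ∀ t : ℝ, MeasurableSet {a | t < f a} := fun t =>
    measurableSet_lt measurable_const hfm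
  rw [key μ]
  have hempty : ∀ t : ℝ, 1 ≤ t → {a | t < f a} = ∅ := by
    intro t ht
    ext a
    simp only [mem_setOf_eq, mem_empty_iff_false, iff_false, not_lt]
    exact (hfb a).trans ht
  calc ∫⁻ t in Ioi (0:ℝ), μ {a | t < f a}
      ≤ ∫⁻ t in Ioi (0:ℝ), (Ioo (0:ℝ) 1).indicator
        (fun t => e * μ' {a | t < f a} + d) t := by
        apply setLIntegral_mono' measurableSet_Ioi
        intro t ht
        rcases lt_or_ge t 1 with h1 | h1
        · rw [indicator_of_mem (show t ∈ Ioo (0:ℝ) 1 from ⟨ht, h1⟩)]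
          exact hμ _ (hset t)
        · rw [hempty t h1]
          simp
    _ = ∫⁻ t in Ioo (0:ℝ) 1, (e * μ' {a | t < f a} + d) := by
        rw [← lintegral_indicator measurableSet_Ioo]
        rw [setLIntegral_eq_of_support_subset]
        exact (Function.support_subset_iff.2 fun t ht => by
          by_contra hmem
          exact ht (indicator_of_notMem hmem _)).trans Ioo_subset_Ioi_self
    _ = e * (∫⁻ t in Ioo (0:ℝ) 1, μ' {a | t < f a}) + d * volume (Ioo (0:ℝ) 1) := by
        have hmono : Antitone fun t : ℝ => μ' {a | t < f a} :=
          fun s t hst => measure_mono fun a ha => lt_of_le_of_lt hst ha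
        rw [lintegral_add_right _ measurable_const, lintegral_const,
          lintegral_const_mul _ hmono.measurable, Measure.restrict_apply_univ]
    _ ≤ e * (∫⁻ a, h a ∂μ') + d := by
        have hvol : volume (Ioo (0:ℝ) 1) = 1 := by simp [Real.volume_Ioo]
        rw [hvol, mul_one, key μ']
        gcongr
        exact Ioo_subset_Ioi_self

/-- **sequential composition.** If `μ, μ'` are probability measures on
`α` that are `(ε₁,δ₁)`-close, and `κ, κ'` are Markov kernels from `α` to `β` such that
for every `a ∈ α` the measures `κ(a)` and `κ'(a)` are `(ε₂,δ₂)`-close, then the joint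
measures `μ ⊗ₘ κ` and `μ' ⊗ₘ κ'` on `α × β` are `(ε₁+ε₂, δ₁+δ₂)`-close. -/
theorem close_measures_compProd
    {α β : Type*} [MeasurableSpace α] [MeasurableSpace β]
    (μ μ' : Measure α) [IsProbabilityMeasure μ] [IsProbabilityMeasure μ']
    (κ κ' : ProbabilityTheory.Kernel α β) [IsMarkovKernel κ] [IsMarkovKernel κ']
    (ε₁ ε₂ δ₁ δ₂ : ℝ) (hε₁ : 0 ≤ ε₁) (hε₂ : 0 ≤ ε₂) (hδ₁ : 0 ≤ δ₁) (hδ₂ : 0 ≤ δ₂)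
    (hμ : ∀ A : Set α, MeasurableSet A →
      μ A ≤ ENNReal.ofReal (Real.exp ε₁) * μ' A + ENNReal.ofReal δ₁)
    (hκ : ∀ a : α, ∀ B : Set β, MeasurableSet B →
      κ a B ≤ ENNReal.ofReal (Real.exp ε₂) * κ' a B + ENNReal.ofReal δ₂) :
    ∀ S : Set (α × β), MeasurableSet S →
      (μ ⊗ₘ κ) S ≤ ENNReal.ofReal (Real.exp (ε₁ + ε₂)) * (μ' ⊗ₘ κ') S
        + ENNReal.ofReal (δ₁ + δ₂) := by
  intro S hS
  set e₁ := ENNReal.ofReal (Real.exp ε₁)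
  set e₂ := ENNReal.ofReal (Real.exp ε₂)
  set d₁ := ENNReal.ofReal δ₁
  set d₂ := ENNReal.ofReal δ₂
  set g : α → ENNReal := fun a => κ' a (Prod.mk a ⁻¹' S) with hg
  set h : α → ENNReal := fun a => κ a (Prod.mk a ⁻¹' S) - d₂ with hh
  have hgm : Measurable g := Kernel.measurable_kernel_prodMk_left hS
  have hfm : Measurable fun a => κ a (Prod.mk a ⁻¹' S) :=
    Kernel.measurable_kernel_prodMk_left hS
  have hhm : Measurable h := hfm.sub measurable_const
  have hhb : ∀ a, h a ≤ 1 := fun a =>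
    (tsub_le_self).trans (prob_le_one)
  have hhe : ∀ a, h a ≤ e₂ * g a := fun a =>
    tsub_le_iff_right.2 (hκ a _ (measurable_prodMk_left hS))
  rw [Measure.compProd_apply hS, Measure.compProd_apply hS]
  calc ∫⁻ a, κ a (Prod.mk a ⁻¹' S) ∂μ
      ≤ ∫⁻ a, (h a + d₂) ∂μ := lintegral_mono fun a => le_tsub_add
    _ = ∫⁻ a, h a ∂μ + d₂ := by
        rw [lintegral_add_right _ measurable_const, lintegral_const, measure_univ, mul_one]
    _ ≤ (e₁ * ∫⁻ a, h a ∂μ' + d₁) + d₂ := by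
        gcongr
        exact aux_lintegral_close μ μ' e₁ d₁ hμ h hhm hhb
    _ ≤ (e₁ * (e₂ * ∫⁻ a, g a ∂μ') + d₁) + d₂ := by
        gcongr
        rw [← lintegral_const_mul _ hgm]
        exact lintegral_mono hhe
    _ = ENNReal.ofReal (Real.exp (ε₁ + ε₂)) * ∫⁻ a, g a ∂μ' + ENNReal.ofReal (δ₁ + δ₂) := by
        rw [← mul_assoc, Real.exp_add, ENNReal.ofReal_mul (Real.exp_nonneg _),
          ENNReal.ofReal_add hδ₁ hδ₂, add_assoc]
end
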